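/- arXiv:2204.07757 — 6 statements merged into one kernel-verified Lean document; each statement's English description precedes it below -/
import Mathlib

section
/- Let (Y_t)_{t≥0} be a real-valued stochastic process with E[Y_t Y_s] = σ² e^{−λ|t−s|} for all s,t ≥ 0, where σ² > 0 and λ > 0. Fix C > 0 and define X_t = Y_t − C ∫_0^t e^{−(C+λ)(t−s)} Y_s ds. Then E[X_t²] = σ² (1 + (C/(C+λ))(e^{−2(C+λ)t} − 1)), which is strictly less than σ² for every t > 0 and decreasing in t. -/
open MeasureTheory Real intervalIntegral

open Function (uncurry)

/-!
Write `X_t = Y_t - C Z_t` with `Z_t = ∫_0^t k(s) Y_s ds`, `k(s) = e^{-(C+λ)(t-s)}`, and expand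
`E[X_t²] = σ² - 2C E[Y_t Z_t] + C² E[Z_t²]`. Since `E[Y_s²] = σ²` is bounded and `|k| ≤ 1` on
`[0, t]`, the integrands are square integrable on the product of `[0, t]` (or `[0, t]²`) with `Ω`,
so Fubini moves the expectation inside: both terms become integrals of `k` against the covariance
`σ² e^{-λ|s-u|}`. Splitting `|s - u|` at `u = s` leaves integrals of exponentials only.
-/

section SecondMoment

variable {Ω α : Type*} [MeasurableSpace Ω] [MeasurableSpace α] {P : Measure Ω} {ν : Measure α}
  [SFinite P] [IsFiniteMeasure ν]

lemma integrable_prod_sq_of_integral_sq_le {f : α → Ω → ℝ} (hf : Measurable (uncurry f)) {M : ℝ}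
    (hf2 : ∀ᵐ a ∂ν, Integrable (fun ω => f a ω ^ 2) P) (hM : ∀ᵐ a ∂ν, ∫ ω, f a ω ^ 2 ∂P ≤ M) :
    Integrable (fun q : α × Ω => f q.1 q.2 ^ 2) (ν.prod P) := by
  have hmeas : AEStronglyMeasurable (fun q : α × Ω => f q.1 q.2 ^ 2) (ν.prod P) :=
    (hf.pow_const 2).aestronglyMeasurable
  refine (integrable_prod_iff hmeas).2
    ⟨hf2, Integrable.of_bound hmeas.norm.integral_prod_right' M ?_⟩
  filter_upwards [hM] with a ha
  rw [Real.norm_eq_abs, abs_of_nonneg (integral_nonneg fun _ => norm_nonneg _)]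
  simpa using ha

lemma integrable_prod_mul_of_integral_sq_le {f g : α → Ω → ℝ} (hf : Measurable (uncurry f))
    (hg : Measurable (uncurry g)) {M N : ℝ}
    (hf2 : ∀ᵐ a ∂ν, Integrable (fun ω => f a ω ^ 2) P) (hM : ∀ᵐ a ∂ν, ∫ ω, f a ω ^ 2 ∂P ≤ M)
    (hg2 : ∀ᵐ a ∂ν, Integrable (fun ω => g a ω ^ 2) P) (hN : ∀ᵐ a ∂ν, ∫ ω, g a ω ^ 2 ∂P ≤ N) :
    Integrable (fun q : α × Ω => f q.1 q.2 * g q.1 q.2) (ν.prod P) := by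
  have hfL2 : MemLp (fun q : α × Ω => f q.1 q.2) 2 (ν.prod P) :=
    (memLp_two_iff_integrable_sq hf.aestronglyMeasurable).2
      (integrable_prod_sq_of_integral_sq_le hf hf2 hM)
  have hgL2 : MemLp (fun q : α × Ω => g q.1 q.2) 2 (ν.prod P) :=
    (memLp_two_iff_integrable_sq hg.aestronglyMeasurable).2
      (integrable_prod_sq_of_integral_sq_le hg hg2 hN)
  exact hfL2.integrable_mul hgL2

omit [MeasurableSpace Ω] [SFinite P] in
lemma sq_integral_eq_integral_prod_mul (Y : α → Ω → ℝ) (ω : Ω) :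
    (∫ a, Y a ω ∂ν) ^ 2 = ∫ p, Y p.1 ω * Y p.2 ω ∂(ν.prod ν) :=
  (sq _).trans (integral_prod_mul (fun a => Y a ω) (fun b => Y b ω)).symm

variable {Y : α → Ω → ℝ} {M : ℝ} (hY : Measurable (uncurry Y))
  (hY2 : ∀ᵐ a ∂ν, Integrable (fun ω => Y a ω ^ 2) P) (hM : ∀ᵐ a ∂ν, ∫ ω, Y a ω ^ 2 ∂P ≤ M)
include hY hY2 hM

lemma integrable_prod_mul_of_sq_integrable {W : Ω → ℝ} (hW : Measurable W)
    (hW2 : Integrable (fun ω => W ω ^ 2) P) :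
    Integrable (fun q : α × Ω => W q.2 * Y q.1 q.2) (ν.prod P) :=
  integrable_prod_mul_of_integral_sq_le (f := fun _ => W) (hW.comp measurable_snd) hY
    (ae_of_all _ fun _ => hW2) (ae_of_all _ fun _ => le_rfl) hY2 hM

lemma integrable_mul_integral {W : Ω → ℝ} (hW : Measurable W)
    (hW2 : Integrable (fun ω => W ω ^ 2) P) :
    Integrable (fun ω => W ω * ∫ a, Y a ω ∂ν) P := by
  simpa only [MeasureTheory.integral_const_mul] using
    (integrable_prod_mul_of_sq_integrable hY hY2 hM hW hW2).integral_prod_right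

lemma integral_mul_integral_eq {W : Ω → ℝ} (hW : Measurable W)
    (hW2 : Integrable (fun ω => W ω ^ 2) P) :
    ∫ ω, W ω * ∫ a, Y a ω ∂ν ∂P = ∫ a, ∫ ω, W ω * Y a ω ∂P ∂ν := by
  simp_rw [← MeasureTheory.integral_const_mul]
  exact (integral_integral_swap (integrable_prod_mul_of_sq_integrable hY hY2 hM hW hW2)).symm

lemma integrable_prod_prod_mul :
    Integrable (uncurry fun (p : α × α) ω => Y p.1 ω * Y p.2 ω) ((ν.prod ν).prod P) := by
  have h₁ : Measurable (uncurry fun (p : α × α) => Y p.1) :=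
    hY.comp (measurable_fst.fst.prodMk measurable_snd)
  have h₂ : Measurable (uncurry fun (p : α × α) => Y p.2) :=
    hY.comp (measurable_fst.snd.prodMk measurable_snd)
  exact integrable_prod_mul_of_integral_sq_le h₁ h₂
    (Measure.quasiMeasurePreserving_fst.ae hY2) (Measure.quasiMeasurePreserving_fst.ae hM)
    (Measure.quasiMeasurePreserving_snd.ae hY2) (Measure.quasiMeasurePreserving_snd.ae hM)

lemma integrable_sq_integral : Integrable (fun ω => (∫ a, Y a ω ∂ν) ^ 2) P := by
  simpa only [sq_integral_eq_integral_prod_mul, Function.uncurry_apply_pair] using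
    (integrable_prod_prod_mul hY hY2 hM).integral_prod_right

lemma integral_sq_integral_eq :
    ∫ ω, (∫ a, Y a ω ∂ν) ^ 2 ∂P = ∫ a, ∫ b, ∫ ω, Y a ω * Y b ω ∂P ∂ν ∂ν := by
  have h := integrable_prod_prod_mul hY hY2 hM
  simp_rw [sq_integral_eq_integral_prod_mul]
  rw [← integral_integral_swap h]
  exact integral_prod _ h.integral_prod_left

end SecondMoment

lemma integral_sub_const_mul_sq {Ω : Type*} [MeasurableSpace Ω] {P : Measure Ω} {U V : Ω → ℝ}
    (hU : Integrable (fun ω => U ω ^ 2) P) (hUV : Integrable (fun ω => U ω * V ω) P)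
    (hV : Integrable (fun ω => V ω ^ 2) P) (c : ℝ) :
    ∫ ω, (U ω - c * V ω) ^ 2 ∂P
      = ∫ ω, U ω ^ 2 ∂P - 2 * c * ∫ ω, U ω * V ω ∂P + c ^ 2 * ∫ ω, V ω ^ 2 ∂P := by
  have expand : (fun ω => (U ω - c * V ω) ^ 2)
      = fun ω => U ω ^ 2 - 2 * c * (U ω * V ω) + c ^ 2 * V ω ^ 2 := by
    funext ω; ring
  have hUUV : Integrable (fun ω => U ω ^ 2 - 2 * c * (U ω * V ω)) P := hU.sub (hUV.const_mul _)
  rw [expand, integral_add hUUV (hV.const_mul _),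
    integral_sub hU (hUV.const_mul _), MeasureTheory.integral_const_mul,
    MeasureTheory.integral_const_mul]

lemma integral_exp_const_mul {c : ℝ} (hc : c ≠ 0) (l r : ℝ) :
    ∫ x in l..r, exp (c * x) = (exp (c * r) - exp (c * l)) / c := by
  rw [integral_comp_mul_left (fun x => exp x) hc, integral_exp, smul_eq_mul, inv_mul_eq_div]

lemma integral_exp_mul_exp_neg_abs {a b s t : ℝ} (hsum : a + b ≠ 0) (hdiff : a - b ≠ 0)
    (hs : 0 ≤ s) (hst : s ≤ t) :
    ∫ u in 0..t, exp (a * u) * exp (-b * |s - u|)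
      = (exp (a * s) - exp (-b * s)) / (a + b)
        + (exp ((a - b) * t + b * s) - exp (a * s)) / (a - b) := by
  have hcont : Continuous fun u => exp (a * u) * exp (-b * |s - u|) := by fun_prop
  rw [← integral_add_adjacent_intervals (b := s) (hcont.intervalIntegrable _ _)
    (hcont.intervalIntegrable _ _)]
  have left : Set.EqOn (fun u => exp (a * u) * exp (-b * |s - u|))
      (fun u => exp (-b * s) * exp ((a + b) * u)) (Set.uIcc 0 s) := by
    intro u hu
    rw [Set.uIcc_of_le hs] at hu
    simp only [abs_of_nonneg (sub_nonneg.2 hu.2), ← exp_add]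
    ring_nf
  have right : Set.EqOn (fun u => exp (a * u) * exp (-b * |s - u|))
      (fun u => exp (b * s) * exp ((a - b) * u)) (Set.uIcc s t) := by
    intro u hu
    rw [Set.uIcc_of_le hst] at hu
    simp only [abs_of_nonpos (sub_nonpos.2 hu.1), ← exp_add]
    ring_nf
  rw [integral_congr left, integral_congr right, intervalIntegral.integral_const_mul,
    intervalIntegral.integral_const_mul, integral_exp_const_mul hsum, integral_exp_const_mul hdiff]
  simp only [mul_div_assoc', mul_sub, ← exp_add, mul_zero, exp_zero, mul_one]
  ring_nf

lemma integral_integral_exp_mul_exp_neg_abs {a b t : ℝ} (ha : a ≠ 0) (hsum : a + b ≠ 0)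
    (hdiff : a - b ≠ 0) (ht : 0 ≤ t) :
    ∫ s in 0..t, ∫ u in 0..t, exp (a * s) * exp (a * u) * exp (-b * |s - u|)
      = 2 / (a + b) * ((exp (2 * a * t) - 1) / (2 * a) - (exp ((a - b) * t) - 1) / (a - b)) := by
  have inner : Set.EqOn (fun s => ∫ u in 0..t, exp (a * s) * exp (a * u) * exp (-b * |s - u|))
      (fun s => (1 / (a + b) - 1 / (a - b)) * exp (2 * a * s) - 1 / (a + b) * exp ((a - b) * s)
        + exp ((a - b) * t) / (a - b) * exp ((a + b) * s))
      (Set.uIcc 0 t) := by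
    intro s hs
    rw [Set.uIcc_of_le ht] at hs
    simp only [mul_assoc, intervalIntegral.integral_const_mul,
      integral_exp_mul_exp_neg_abs hsum hdiff hs.1 hs.2]
    simp only [mul_add, mul_div_assoc', mul_sub, div_mul_eq_mul_div, ← exp_add]
    ring_nf
  have hi : ∀ k c, IntervalIntegrable (fun x => k * exp (c * x)) volume 0 t :=
    fun k c => Continuous.intervalIntegrable (by fun_prop) _ _
  rw [integral_congr inner, intervalIntegral.integral_add ((hi _ _).sub (hi _ _)) (hi _ _),
    intervalIntegral.integral_sub (hi _ _) (hi _ _), intervalIntegral.integral_const_mul,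
    intervalIntegral.integral_const_mul, intervalIntegral.integral_const_mul,
    integral_exp_const_mul hsum, integral_exp_const_mul hdiff,
    integral_exp_const_mul (mul_ne_zero two_ne_zero ha)]
  simp only [mul_zero, exp_zero, mul_div_assoc', div_mul_eq_mul_div, mul_sub, ← exp_add]
  field_simp
  ring_nf

lemma integral_exp_neg_mul_sub {c : ℝ} (hc : c ≠ 0) (t : ℝ) :
    ∫ s in 0..t, exp (-c * (t - s)) = (1 - exp (-c * t)) / c := by
  rw [integral_comp_sub_left (fun x => exp (-c * x)), sub_self, sub_zero,
    integral_exp_const_mul (neg_ne_zero.2 hc), mul_zero, exp_zero]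
  field_simp
  ring

lemma integral_integral_exp_kernel {c b t : ℝ} (hc : c ≠ 0) (hcb : c + b ≠ 0)
    (hcbb : c + 2 * b ≠ 0) (ht : 0 ≤ t) :
    ∫ s in 0..t, ∫ u in 0..t,
        exp (-(c + b) * (t - s)) * exp (-(c + b) * (t - u)) * exp (-b * |s - u|)
      = 2 / (c + 2 * b) * ((1 - exp (-2 * (c + b) * t)) / (2 * (c + b))
          - (exp (-(c + 2 * b) * t) - exp (-2 * (c + b) * t)) / c) := by
  have factor : ∀ s u, exp (-(c + b) * (t - s)) * exp (-(c + b) * (t - u)) * exp (-b * |s - u|)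
      = exp (-2 * (c + b) * t) * (exp ((c + b) * s) * exp ((c + b) * u) * exp (-b * |s - u|)) := by
    intro s u
    simp only [← exp_add]
    ring_nf
  simp only [factor, intervalIntegral.integral_const_mul]
  rw [integral_integral_exp_mul_exp_neg_abs (a := c + b) hcb (by convert hcbb using 1; ring)
    (by convert hc using 1; ring) ht, add_sub_cancel_right, add_assoc, ← two_mul]
  have e₁ : exp (-2 * (c + b) * t) * exp (2 * (c + b) * t) = 1 := by
    rw [← exp_add]; ring_nf; exact exp_zero
  have e₂ : exp (-2 * (c + b) * t) * exp (c * t) = exp (-(c + 2 * b) * t) := by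
    rw [← exp_add]; ring_nf
  linear_combination (2 / (c + 2 * b) / (2 * (c + b))) * e₁ - (2 / (c + 2 * b) / c) * e₂

section ExponentialCovariance

variable {Ω : Type*} [MeasurableSpace Ω] {P : Measure Ω} {σ2 lam : ℝ} {Y : ℝ → Ω → ℝ}

lemma ae_restrict_integrable_sq_exp_kernel_mul
    (hsq : ∀ t : ℝ, 0 ≤ t → Integrable (fun ω => Y t ω ^ 2) P) (c t : ℝ) :
    ∀ᵐ s ∂volume.restrict (Set.Ioc 0 t),
      Integrable (fun ω => (exp (-c * (t - s)) * Y s ω) ^ 2) P := by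
  filter_upwards [ae_restrict_mem measurableSet_Ioc] with s hs
  simpa only [mul_pow] using (hsq s hs.1.le).const_mul (exp (-c * (t - s)) ^ 2)

variable (hcov : ∀ s t : ℝ, 0 ≤ s → 0 ≤ t → ∫ ω, Y t ω * Y s ω ∂P = σ2 * exp (-lam * |t - s|))
include hcov

lemma integral_sq_eq_of_exp_cov {s : ℝ} (hs : 0 ≤ s) : ∫ ω, Y s ω ^ 2 ∂P = σ2 := by
  simpa [sq] using hcov s s hs hs

lemma ae_restrict_integral_sq_exp_kernel_mul_le {c : ℝ} (hc : 0 ≤ c) (t : ℝ) :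
    ∀ᵐ s ∂volume.restrict (Set.Ioc 0 t), ∫ ω, (exp (-c * (t - s)) * Y s ω) ^ 2 ∂P ≤ σ2 := by
  filter_upwards [ae_restrict_mem measurableSet_Ioc] with s hs
  have hσ : 0 ≤ σ2 :=
    integral_sq_eq_of_exp_cov hcov hs.1.le ▸ integral_nonneg fun ω => sq_nonneg _
  have hk : exp (-c * (t - s)) ^ 2 ≤ 1 := by
    have := mul_nonneg hc (sub_nonneg.2 hs.2)
    rw [← exp_nat_mul, exp_le_one_iff]
    push_cast
    linarith
  simp only [mul_pow, MeasureTheory.integral_const_mul, integral_sq_eq_of_exp_cov hcov hs.1.le]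
  exact mul_le_of_le_one_left hσ hk

lemma setIntegral_integral_mul_exp_kernel_mul {c t : ℝ} (hc : c + 2 * lam ≠ 0) (ht : 0 ≤ t) :
    ∫ s in Set.Ioc 0 t, ∫ ω, Y t ω * (exp (-(c + lam) * (t - s)) * Y s ω) ∂P
      = σ2 * ((1 - exp (-(c + 2 * lam) * t)) / (c + 2 * lam)) := by
  rw [← integral_exp_neg_mul_sub hc, ← intervalIntegral.integral_const_mul, integral_of_le ht]
  refine setIntegral_congr_fun measurableSet_Ioc fun s hs => ?_
  have regroup : ∀ ω, Y t ω * (exp (-(c + lam) * (t - s)) * Y s ω)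
      = exp (-(c + lam) * (t - s)) * (Y t ω * Y s ω) := fun ω => by ring
  rw [integral_congr_ae (ae_of_all _ regroup), MeasureTheory.integral_const_mul,
    hcov s t hs.1.le ht, abs_of_nonneg (sub_nonneg.2 hs.2), mul_left_comm, ← exp_add]
  ring_nf

lemma setIntegral_setIntegral_integral_exp_kernel_mul {c t : ℝ} (hc : c ≠ 0)
    (hcl : c + lam ≠ 0) (hcll : c + 2 * lam ≠ 0) (ht : 0 ≤ t) :
    ∫ s in Set.Ioc 0 t, ∫ u in Set.Ioc 0 t,
        ∫ ω, exp (-(c + lam) * (t - s)) * Y s ω * (exp (-(c + lam) * (t - u)) * Y u ω) ∂P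
      = σ2 * (2 / (c + 2 * lam) * ((1 - exp (-2 * (c + lam) * t)) / (2 * (c + lam))
          - (exp (-(c + 2 * lam) * t) - exp (-2 * (c + lam) * t)) / c)) := by
  rw [← integral_integral_exp_kernel hc hcl hcll ht, ← intervalIntegral.integral_const_mul,
    integral_of_le ht]
  refine setIntegral_congr_fun measurableSet_Ioc fun s hs => ?_
  rw [← intervalIntegral.integral_const_mul, integral_of_le ht]
  refine setIntegral_congr_fun measurableSet_Ioc fun u hu => ?_
  have regroup : ∀ ω, exp (-(c + lam) * (t - s)) * Y s ω * (exp (-(c + lam) * (t - u)) * Y u ω)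
      = exp (-(c + lam) * (t - s)) * exp (-(c + lam) * (t - u)) * (Y s ω * Y u ω) :=
    fun ω => by ring
  rw [integral_congr_ae (ae_of_all _ regroup), MeasureTheory.integral_const_mul,
    hcov u s hu.1.le hs.1.le]
  ring

lemma integral_sq_sub_const_mul_integral_exp_kernel_mul [SFinite P] {C : ℝ} (hlam : 0 ≤ lam)
    (hC : 0 < C) (hmeas : Measurable (uncurry Y))
    (hsq : ∀ t : ℝ, 0 ≤ t → Integrable (fun ω => Y t ω ^ 2) P) {t : ℝ} (ht : 0 ≤ t) :
    ∫ ω, (Y t ω - C * ∫ s in 0..t, exp (-(C + lam) * (t - s)) * Y s ω) ^ 2 ∂P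
      = σ2 * (1 + C / (C + lam) * (exp (-2 * (C + lam) * t) - 1)) := by
  have hCl : 0 < C + lam := add_pos_of_pos_of_nonneg hC hlam
  have hCll : 0 < C + 2 * lam := add_pos_of_pos_of_nonneg hC (by positivity)
  have : IsFiniteMeasure (volume.restrict (Set.Ioc 0 t)) :=
    isFiniteMeasure_restrict.2 measure_Ioc_lt_top.ne
  have hV : Measurable (uncurry fun s ω => exp (-(C + lam) * (t - s)) * Y s ω) :=
    (continuous_exp.measurable.comp (by fun_prop)).mul hmeas
  have hV2 := ae_restrict_integrable_sq_exp_kernel_mul hsq (C + lam) t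
  have hVσ := ae_restrict_integral_sq_exp_kernel_mul_le hcov hCl.le t
  have hYt : Measurable (Y t) := hmeas.of_uncurry_left
  simp only [integral_of_le ht]
  rw [integral_sub_const_mul_sq (hsq t ht) (integrable_mul_integral hV hV2 hVσ hYt (hsq t ht))
      (integrable_sq_integral hV hV2 hVσ),
    integral_mul_integral_eq hV hV2 hVσ hYt (hsq t ht), integral_sq_integral_eq hV hV2 hVσ,
    integral_sq_eq_of_exp_cov hcov ht, setIntegral_integral_mul_exp_kernel_mul hcov hCll.ne' ht,
    setIntegral_setIntegral_integral_exp_kernel_mul hcov hC.ne' hCl.ne' hCll.ne' ht]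
  field_simp
  ring

end ExponentialCovariance

lemma strictAnti_mul_one_add_div_mul_exp_sub_one {σ2 lam C : ℝ} (hσ : 0 < σ2) (hC : 0 < C)
    (hCl : 0 < C + lam) :
    StrictAnti fun t => σ2 * (1 + C / (C + lam) * (exp (-2 * (C + lam) * t) - 1)) := by
  intro s t hst
  have hexp : exp (-2 * (C + lam) * t) < exp (-2 * (C + lam) * s) := exp_lt_exp.2 (by nlinarith)
  have hq : 0 < C / (C + lam) := div_pos hC hCl
  dsimp only
  gcongr

theorem stmt7_general {Ω : Type*} [MeasurableSpace Ω] (P : Measure Ω) [IsProbabilityMeasure P]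
    (σ2 lam C : ℝ) (hσ : 0 < σ2) (hlam : 0 < lam) (hC : 0 < C)
    (Y : ℝ → Ω → ℝ) (hmeas : Measurable (Function.uncurry Y))
    (hsq : ∀ t : ℝ, 0 ≤ t → Integrable (fun ω => (Y t ω) ^ 2) P)
    (hcov : ∀ s t : ℝ, 0 ≤ s → 0 ≤ t →
      ∫ ω, Y t ω * Y s ω ∂P = σ2 * Real.exp (-lam * |t - s|))
    (X : ℝ → Ω → ℝ)
    (hX : ∀ t ω, X t ω
      = Y t ω - C * ∫ s in (0:ℝ)..t, Real.exp (-(C + lam) * (t - s)) * Y s ω) :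
    (∀ t : ℝ, 0 ≤ t →
      ∫ ω, (X t ω) ^ 2 ∂P
        = σ2 * (1 + C / (C + lam) * (Real.exp (-2 * (C + lam) * t) - 1))) ∧
    (∀ t : ℝ, 0 < t → ∫ ω, (X t ω) ^ 2 ∂P < σ2) ∧
    (∀ s t : ℝ, 0 ≤ s → s < t → ∫ ω, (X t ω) ^ 2 ∂P < ∫ ω, (X s ω) ^ 2 ∂P) := by
  have formula : ∀ t : ℝ, 0 ≤ t → ∫ ω, (X t ω) ^ 2 ∂P
      = σ2 * (1 + C / (C + lam) * (Real.exp (-2 * (C + lam) * t) - 1)) := fun t ht => by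
    simp only [hX]
    exact integral_sq_sub_const_mul_integral_exp_kernel_mul hcov hlam.le hC hmeas hsq ht
  have anti := strictAnti_mul_one_add_div_mul_exp_sub_one (lam := lam) hσ hC (by linarith)
  refine ⟨formula, fun t ht => ?_, fun s t hs hst => ?_⟩
  · simpa [formula t ht.le] using anti ht
  · rw [formula t (hs.trans hst.le), formula s hs]
    exact anti hst

/-- If `E[Y_t Y_s] = σ² e^{−λ|t−s|}` and `X_t = Y_t − C ∫_0^t e^{−(C+λ)(t−s)} Y_s ds`, then
`E[X_t²] = σ²(1 + (C/(C+λ))(e^{−2(C+λ)t} − 1))`, which is `< σ²` for `t > 0` and decreasing. -/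
theorem stmt7 {Ω : Type*} [MeasurableSpace Ω] (P : Measure Ω) [IsProbabilityMeasure P]
    (σ2 lam C : ℝ) (hσ : 0 < σ2) (hlam : 0 < lam) (hC : 0 < C)
    (Y : ℝ → Ω → ℝ) (hmeas : Measurable (Function.uncurry Y))
    (hpath : ∀ ω, Continuous fun t => Y t ω)
    (hsq : ∀ t : ℝ, 0 ≤ t → Integrable (fun ω => (Y t ω) ^ 2) P)
    (hcov : ∀ s t : ℝ, 0 ≤ s → 0 ≤ t →
      ∫ ω, Y t ω * Y s ω ∂P = σ2 * Real.exp (-lam * |t - s|))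
    (X : ℝ → Ω → ℝ)
    (hX : ∀ t ω, X t ω
      = Y t ω - C * ∫ s in (0:ℝ)..t, Real.exp (-(C + lam) * (t - s)) * Y s ω) :
    (∀ t : ℝ, 0 ≤ t →
      ∫ ω, (X t ω) ^ 2 ∂P
        = σ2 * (1 + C / (C + lam) * (Real.exp (-2 * (C + lam) * t) - 1))) ∧
    (∀ t : ℝ, 0 < t → ∫ ω, (X t ω) ^ 2 ∂P < σ2) ∧
    (∀ s t : ℝ, 0 ≤ s → s < t → ∫ ω, (X t ω) ^ 2 ∂P < ∫ ω, (X s ω) ^ 2 ∂P) :=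
  stmt7_general P σ2 lam C hσ hlam hC Y hmeas hsq hcov X hX
end

section
/- Let (Y_t) satisfy E[Y_t Y_s] = σ² e^{−λ|t−s|} with σ², λ > 0 and define X_t = Y_t + λ ∫_0^t Y_s ds (the borderline case C = λ). Then E[X_t²] = σ²(1 + 2λt), which tends to infinity linearly in t. -/
/-!
Write `X_t = ∫ Y_s dρ_t(s)` with `ρ_t = δ_t + λ · Leb|_(0,t]`. Since the second moments of `Y`
are bounded, Fubini gives `E[X_t²] = σ² ∬ e^{-λ|s-u|} dρ_t(u) dρ_t(s)`. In the borderline case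
the inner integral collapses to `2 - e^{-λs}` for `s ∈ [0, t]`: the atom at `t` contributes
`e^{-λ(t-s)}`, which cancels the same term coming from the Lebesgue part. Integrating
`2 - e^{-λs}` against `ρ_t` then gives `1 + 2λt`.
-/

open MeasureTheory Real intervalIntegral

section SecondMoment

variable {Ω T : Type*} [MeasurableSpace Ω] [MeasurableSpace T] {P : Measure Ω}

theorem integrable_mul_of_integrable_sq {f g : Ω → ℝ} (hf : AEStronglyMeasurable f P)
    (hg : AEStronglyMeasurable g P) (hf2 : Integrable (fun ω => f ω ^ 2) P)
    (hg2 : Integrable (fun ω => g ω ^ 2) P) : Integrable (fun ω => f ω * g ω) P :=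
  ((memLp_two_iff_integrable_sq hf).2 hf2).integrable_mul ((memLp_two_iff_integrable_sq hg).2 hg2)

theorem integral_norm_mul_le_of_integrable_sq {f g : Ω → ℝ} (hf : AEStronglyMeasurable f P)
    (hg : AEStronglyMeasurable g P) (hf2 : Integrable (fun ω => f ω ^ 2) P)
    (hg2 : Integrable (fun ω => g ω ^ 2) P) :
    ∫ ω, ‖f ω * g ω‖ ∂P ≤ (∫ ω, f ω ^ 2 ∂P + ∫ ω, g ω ^ 2 ∂P) / 2 := by
  rw [← integral_add hf2 hg2, ← MeasureTheory.integral_div]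
  refine integral_mono (integrable_mul_of_integrable_sq hf hg hf2 hg2).norm
    ((hf2.add hg2).div_const 2) fun ω => ?_
  have := two_mul_le_add_sq |f ω| |g ω|
  rw [sq_abs, sq_abs] at this
  simp only [Real.norm_eq_abs, abs_mul]
  linarith

variable [SFinite P] {μ : Measure T} [IsFiniteMeasure μ] {Y : T → Ω → ℝ}

theorem integrable_mul_prod_of_integral_sq_le (hY : Measurable (Function.uncurry Y)) {M : ℝ}
    (hsq : ∀ᵐ s ∂μ, Integrable (fun ω => Y s ω ^ 2) P ∧ ∫ ω, Y s ω ^ 2 ∂P ≤ M) :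
    Integrable (fun q : Ω × T × T => Y q.2.1 q.1 * Y q.2.2 q.1) (P.prod (μ.prod μ)) := by
  have hYm : ∀ s, Measurable (Y s) := fun s => hY.comp measurable_prodMk_left
  have hmeas : Measurable fun q : Ω × T × T => Y q.2.1 q.1 * Y q.2.2 q.1 :=
    (hY.comp (measurable_snd.fst.prodMk measurable_fst)).mul
      (hY.comp (measurable_snd.snd.prodMk measurable_fst))
  have hpair : ∀ᵐ p ∂μ.prod μ, (Integrable (fun ω => Y p.1 ω ^ 2) P ∧ ∫ ω, Y p.1 ω ^ 2 ∂P ≤ M) ∧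
      (Integrable (fun ω => Y p.2 ω ^ 2) P ∧ ∫ ω, Y p.2 ω ^ 2 ∂P ≤ M) :=
    (Measure.quasiMeasurePreserving_fst.ae hsq).and (Measure.quasiMeasurePreserving_snd.ae hsq)
  refine (integrable_prod_iff' hmeas.aestronglyMeasurable).2 ⟨?_, ?_⟩
  · filter_upwards [hpair] with p hp
    exact integrable_mul_of_integrable_sq (hYm _).aestronglyMeasurable
      (hYm _).aestronglyMeasurable hp.1.1 hp.2.1
  · refine Integrable.mono' (integrable_const M)
      hmeas.norm.stronglyMeasurable.integral_prod_left'.aestronglyMeasurable ?_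
    filter_upwards [hpair] with p ⟨⟨h1, hM1⟩, ⟨h2, hM2⟩⟩
    rw [Real.norm_of_nonneg (integral_nonneg fun ω => norm_nonneg _)]
    have := integral_norm_mul_le_of_integrable_sq (hYm p.1).aestronglyMeasurable
      (hYm p.2).aestronglyMeasurable h1 h2
    linarith

theorem integral_sq_integral_eq_integral_integral_integral_mul
    (hY : Measurable (Function.uncurry Y)) {M : ℝ}
    (hsq : ∀ᵐ s ∂μ, Integrable (fun ω => Y s ω ^ 2) P ∧ ∫ ω, Y s ω ^ 2 ∂P ≤ M) :
    ∫ ω, (∫ s, Y s ω ∂μ) ^ 2 ∂P = ∫ s, ∫ u, ∫ ω, Y s ω * Y u ω ∂P ∂μ ∂μ := by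
  have hint := integrable_mul_prod_of_integral_sq_le hY hsq
  calc ∫ ω, (∫ s, Y s ω ∂μ) ^ 2 ∂P
      = ∫ ω, ∫ p : T × T, Y p.1 ω * Y p.2 ω ∂μ.prod μ ∂P := by
        congr 1 with ω
        rw [integral_prod_mul (fun s => Y s ω) (fun s => Y s ω), sq]
    _ = ∫ p : T × T, ∫ ω, Y p.1 ω * Y p.2 ω ∂P ∂μ.prod μ := integral_integral_swap hint
    _ = ∫ s, ∫ u, ∫ ω, Y s ω * Y u ω ∂P ∂μ ∂μ := integral_prod _ hint.integral_prod_right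

end SecondMoment

theorem integral_exp_neg_mul {lam : ℝ} (hlam : lam ≠ 0) (a : ℝ) :
    ∫ u in (0:ℝ)..a, exp (-lam * u) = (1 - exp (-lam * a)) / lam := by
  rw [integral_comp_mul_left (fun x => exp x) (neg_ne_zero.mpr hlam), integral_exp]
  simp only [mul_zero, exp_zero, smul_eq_mul]
  field_simp
  ring

theorem integral_exp_neg_mul_abs_sub {lam s t : ℝ} (hlam : lam ≠ 0) (hs : 0 ≤ s) (hst : s ≤ t) :
    ∫ u in (0:ℝ)..t, exp (-lam * |s - u|)
      = (2 - exp (-lam * s) - exp (-lam * (t - s))) / lam := by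
  have hcont : Continuous fun u : ℝ => exp (-lam * |s - u|) := by fun_prop
  have left : ∫ u in (0:ℝ)..s, exp (-lam * |s - u|) = ∫ u in (0:ℝ)..s, exp (-lam * (s - u)) :=
    integral_congr fun u hu => by
      rw [Set.uIcc_of_le hs] at hu
      rw [abs_of_nonneg (sub_nonneg.mpr hu.2)]
  have right : ∫ u in s..t, exp (-lam * |s - u|) = ∫ u in s..t, exp (-lam * (u - s)) :=
    integral_congr fun u hu => by
      rw [Set.uIcc_of_le hst] at hu
      rw [abs_sub_comm, abs_of_nonneg (sub_nonneg.mpr hu.1)]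
  rw [← integral_add_adjacent_intervals (hcont.intervalIntegrable 0 s)
      (hcont.intervalIntegrable s t), left, right,
    integral_comp_sub_left (fun v => exp (-lam * v)),
    integral_comp_sub_right (fun v => exp (-lam * v)), sub_zero, sub_self,
    integral_exp_neg_mul hlam, integral_exp_neg_mul hlam]
  ring

noncomputable def fluctuationMeasure (lam t : ℝ) : Measure ℝ :=
  Measure.dirac t + lam.toNNReal • volume.restrict (Set.Ioc 0 t)

instance (lam t : ℝ) : IsFiniteMeasure (fluctuationMeasure lam t) := by
  unfold fluctuationMeasure; infer_instance

theorem ae_fluctuationMeasure_mem_Icc {lam t : ℝ} (ht : 0 ≤ t) :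
    ∀ᵐ s ∂fluctuationMeasure lam t, s ∈ Set.Icc 0 t := by
  rw [fluctuationMeasure, ae_add_measure_iff, ae_dirac_eq]
  exact ⟨⟨ht, le_rfl⟩, Measure.ae_smul_measure
    ((ae_restrict_mem measurableSet_Ioc).mono fun s hs => Set.Ioc_subset_Icc_self hs) _⟩

theorem integral_fluctuationMeasure {lam t : ℝ} (hlam : 0 ≤ lam) (ht : 0 ≤ t) {f : ℝ → ℝ}
    (hf : Continuous f) :
    ∫ s, f s ∂fluctuationMeasure lam t = f t + lam * ∫ s in (0:ℝ)..t, f s := by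
  rw [fluctuationMeasure, integral_add_measure ?_ ?_, integral_dirac,
    integral_smul_nnreal_measure, NNReal.smul_def, Real.coe_toNNReal _ hlam, integral_of_le ht,
    smul_eq_mul]
  · exact integrable_dirac enorm_lt_top
  · exact (hf.integrableOn_Ioc).smul_measure_nnreal

theorem integral_exp_neg_mul_abs_sub_fluctuationMeasure {lam s t : ℝ} (hlam : 0 < lam)
    (hs : s ∈ Set.Icc 0 t) :
    ∫ u, exp (-lam * |s - u|) ∂fluctuationMeasure lam t = 2 - exp (-lam * s) := by
  rw [integral_fluctuationMeasure hlam.le (hs.1.trans hs.2) (by fun_prop),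
    integral_exp_neg_mul_abs_sub hlam.ne' hs.1 hs.2, abs_sub_comm,
    abs_of_nonneg (sub_nonneg.2 hs.2)]
  field_simp
  ring

theorem integral_integral_exp_neg_mul_abs_sub_fluctuationMeasure {lam t : ℝ} (hlam : 0 < lam)
    (ht : 0 ≤ t) :
    ∫ s, ∫ u, exp (-lam * |s - u|) ∂fluctuationMeasure lam t ∂fluctuationMeasure lam t
      = 1 + 2 * lam * t := by
  have hexp : IntervalIntegrable (fun s => exp (-lam * s)) volume 0 t := by
    apply Continuous.intervalIntegrable; fun_prop
  rw [integral_congr_ae ((ae_fluctuationMeasure_mem_Icc ht).mono fun s hs =>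
      integral_exp_neg_mul_abs_sub_fluctuationMeasure hlam hs),
    integral_fluctuationMeasure hlam.le ht (by fun_prop),
    intervalIntegral.integral_sub intervalIntegrable_const hexp, intervalIntegral.integral_const,
    integral_exp_neg_mul hlam.ne']
  field_simp
  ring

/-- Borderline case `C = λ`: if `E[Y_t Y_s] = σ² e^{−λ|t−s|}` and
`X_t = Y_t + λ ∫_0^t Y_s ds`, then `E[X_t²] = σ²(1 + 2λt)`, which tends to infinity
linearly in `t`. -/
theorem stmt9 {Ω : Type*} [MeasurableSpace Ω] (P : Measure Ω) [IsProbabilityMeasure P]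
    (σ2 lam : ℝ) (hσ : 0 < σ2) (hlam : 0 < lam)
    (Y : ℝ → Ω → ℝ) (hmeas : Measurable (Function.uncurry Y))
    (hpath : ∀ ω, Continuous fun t => Y t ω)
    (hsq : ∀ t : ℝ, 0 ≤ t → Integrable (fun ω => (Y t ω) ^ 2) P)
    (hcov : ∀ s t : ℝ, 0 ≤ s → 0 ≤ t →
      ∫ ω, Y t ω * Y s ω ∂P = σ2 * Real.exp (-lam * |t - s|))
    (X : ℝ → Ω → ℝ)
    (hX : ∀ t ω, X t ω = Y t ω + lam * ∫ s in (0:ℝ)..t, Y s ω) :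
    (∀ t : ℝ, 0 ≤ t → ∫ ω, (X t ω) ^ 2 ∂P = σ2 * (1 + 2 * lam * t)) ∧
    Filter.Tendsto (fun t => ∫ ω, (X t ω) ^ 2 ∂P) Filter.atTop Filter.atTop := by
  have second_moment : ∀ s, 0 ≤ s → ∫ ω, Y s ω ^ 2 ∂P = σ2 := fun s hs => by
    simpa [sq] using hcov s s hs hs
  have moment : ∀ t : ℝ, 0 ≤ t → ∫ ω, (X t ω) ^ 2 ∂P = σ2 * (1 + 2 * lam * t) := by
    intro t ht
    have hρ := ae_fluctuationMeasure_mem_Icc (lam := lam) ht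
    have hXρ : ∀ ω, X t ω = ∫ s, Y s ω ∂fluctuationMeasure lam t := fun ω => by
      rw [hX, integral_fluctuationMeasure hlam.le ht (hpath ω)]
    have hcovρ : ∀ᵐ s ∂fluctuationMeasure lam t,
        ∫ u, ∫ ω, Y s ω * Y u ω ∂P ∂fluctuationMeasure lam t
          = σ2 * ∫ u, exp (-lam * |s - u|) ∂fluctuationMeasure lam t := by
      filter_upwards [hρ] with s hs
      rw [← MeasureTheory.integral_const_mul]
      exact integral_congr_ae (hρ.mono fun u hu => hcov u s hu.1 hs.1)
    simp_rw [hXρ]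
    rw [integral_sq_integral_eq_integral_integral_integral_mul hmeas
        (hρ.mono fun s hs => ⟨hsq s hs.1, (second_moment s hs.1).le⟩),
      integral_congr_ae hcovρ, MeasureTheory.integral_const_mul,
      integral_integral_exp_neg_mul_abs_sub_fluctuationMeasure hlam ht]
  have affine : Filter.Tendsto (fun t : ℝ => σ2 * (1 + 2 * lam * t)) Filter.atTop Filter.atTop :=
    Filter.Tendsto.const_mul_atTop hσ (Filter.tendsto_atTop_add_const_left _ 1
      (Filter.tendsto_id.const_mul_atTop (by positivity)))
  refine ⟨moment, affine.congr' ?_⟩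
  filter_upwards [Filter.eventually_ge_atTop 0] with t ht
  exact (moment t ht).symm
end

section
/- Let α > 1 and a_j = j^{−α} for j ≥ 1. Then there exist constants c, C > 0 such that for all β ≥ 1, c β^{−(α−1)/α} ≤ ∑_{j≥1} j^{−α}/(1 + β j^{−α}) ≤ C β^{−(α−1)/α}. -/
/-!
Each term equals `1 / (j^α + β)`. Split the sum at `N = ⌈β^{1/α}⌉`, where `j^α` reaches `β`.
Below `N` every term is comparable to `1/β`, so the head is comparable to `N/β ≍ β^{1/α - 1}`;
above `N` the terms are at most `j^{-α}`, and the integral test bounds that tail by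
`N^{1-α}/(α-1) ≤ β^{(1-α)/α}/(α-1)`.
-/

open Real Finset Set MeasureTheory

/-- `∑_{j ≥ 1} a_j / (1 + β a_j)` for `a_j = j^{-α}`, with the terms written as `1 / (j^α + β)`. -/
noncomputable def fluctuationSum (α β : ℝ) : ℝ :=
  ∑' n : ℕ, 1 / (((n + 1 : ℕ) : ℝ) ^ α + β)

lemma rpow_neg_div_one_add_mul_rpow_neg {x : ℝ} (hx : 0 < x) (α β : ℝ) :
    x ^ (-α) / (1 + β * x ^ (-α)) = 1 / (x ^ α + β) := by
  have hxα : x ^ α ≠ 0 := (rpow_pos_of_pos hx α).ne'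
  rw [rpow_neg hx.le, ← div_eq_mul_inv, ← one_div, one_add_div hxα, div_div_div_cancel_right₀ hxα]

lemma tsum_rpow_neg_nat_add_le {α : ℝ} (hα : 1 < α) {N : ℕ} (hN : 0 < N) :
    ∑' n : ℕ, ((n + N + 1 : ℕ) : ℝ) ^ (-α) ≤ (N : ℝ) ^ (1 - α) / (α - 1) := by
  have hN' : (0 : ℝ) < N := by exact_mod_cast hN
  calc ∑' n : ℕ, ((n + N + 1 : ℕ) : ℝ) ^ (-α) ≤ ∫ x in Ioi (N : ℝ), x ^ (-α) :=
        AntitoneOn.tsum_comp_add_le_integral N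
          ((antitoneOn_rpow_Ioi_of_exponent_nonpos (by linarith)).mono (Ici_subset_Ioi.2 hN'))
          (integrableOn_Ioi_rpow_of_lt (by linarith) hN')
          fun t ht => rpow_nonneg (hN'.trans ht).le _
    _ = (N : ℝ) ^ (1 - α) / (α - 1) := by
        rw [integral_Ioi_rpow_of_lt (by linarith) hN', ← neg_div_neg_eq, neg_neg]
        congr 1 <;> ring_nf

section

variable {α β : ℝ}

lemma one_div_rpow_add_le_rpow_neg (hβ : 0 ≤ β) {x : ℝ} (hx : 0 < x) :
    1 / (x ^ α + β) ≤ x ^ (-α) := by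
  rw [rpow_neg hx.le, ← one_div]
  exact one_div_le_one_div_of_le (rpow_pos_of_pos hx α) (le_add_of_nonneg_right hβ)

lemma summable_one_div_rpow_add (hα : 1 < α) (hβ : 0 ≤ β) :
    Summable fun n : ℕ => 1 / (((n + 1 : ℕ) : ℝ) ^ α + β) := by
  refine .of_nonneg_of_le (fun n => by positivity)
    (fun n => one_div_rpow_add_le_rpow_neg hβ (by positivity)) ?_
  exact (summable_nat_add_iff 1).2 (summable_nat_rpow.2 (by linarith))

lemma natCast_div_rpow_add_le_fluctuationSum (hα : 1 < α) (hβ : 0 ≤ β) (N : ℕ) :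
    N / ((N : ℝ) ^ α + β) ≤ fluctuationSum α β := by
  have hterm : ∀ n ∈ range N, 1 / ((N : ℝ) ^ α + β) ≤ 1 / (((n + 1 : ℕ) : ℝ) ^ α + β) := by
    intro n hn
    have hnN : ((n + 1 : ℕ) : ℝ) ≤ N := by exact_mod_cast mem_range.1 hn
    gcongr
  calc (N : ℝ) / ((N : ℝ) ^ α + β) = (range N).card • (1 / ((N : ℝ) ^ α + β)) := by
        rw [card_range, nsmul_eq_mul, mul_one_div]
    _ ≤ ∑ n ∈ range N, 1 / (((n + 1 : ℕ) : ℝ) ^ α + β) := card_nsmul_le_sum _ _ _ hterm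
    _ ≤ fluctuationSum α β :=
        (summable_one_div_rpow_add hα hβ).sum_le_tsum _ fun n _ => by positivity

lemma fluctuationSum_le (hα : 1 < α) (hβ : 0 < β) {N : ℕ} (hN : 0 < N) :
    fluctuationSum α β ≤ N / β + (N : ℝ) ^ (1 - α) / (α - 1) := by
  have hs := summable_one_div_rpow_add hα hβ.le
  rw [fluctuationSum, ← hs.sum_add_tsum_nat_add N]
  gcongr
  · calc ∑ n ∈ range N, 1 / (((n + 1 : ℕ) : ℝ) ^ α + β) ≤ ∑ _n ∈ range N, 1 / β :=
          sum_le_sum fun n _ => by gcongr; exact le_add_of_nonneg_left (by positivity)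
      _ = N / β := by rw [sum_const, card_range, nsmul_eq_mul, mul_one_div]
  · calc ∑' n : ℕ, 1 / (((n + N + 1 : ℕ) : ℝ) ^ α + β) ≤ ∑' n : ℕ, ((n + N + 1 : ℕ) : ℝ) ^ (-α) :=
          ((summable_nat_add_iff N).2 hs).tsum_le_tsum
            (fun n => one_div_rpow_add_le_rpow_neg hβ.le (by positivity))
            ((summable_nat_add_iff (N + 1)).2 (summable_nat_rpow.2 (by linarith)))
      _ ≤ (N : ℝ) ^ (1 - α) / (α - 1) := tsum_rpow_neg_nat_add_le hα hN

lemma rpow_one_sub_div_le_fluctuationSum (hα : 1 < α) {b : ℝ} (hb : 2⁻¹ ≤ b) :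
    b ^ (1 - α) / (2 ^ α + 1) ≤ fluctuationSum α (b ^ α) := by
  have hb0 : 0 < b := by linarith
  have hN : (⌈b⌉₊ : ℝ) ≤ 2 * b := Nat.ceil_le_two_mul hb
  calc b ^ (1 - α) / (2 ^ α + 1) = b / ((2 * b) ^ α + b ^ α) := by
        rw [mul_rpow zero_le_two hb0.le, rpow_sub hb0, rpow_one]
        field_simp
    _ ≤ ⌈b⌉₊ / ((⌈b⌉₊ : ℝ) ^ α + b ^ α) := by
        gcongr
        exact Nat.le_ceil b
    _ ≤ fluctuationSum α (b ^ α) :=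
        natCast_div_rpow_add_le_fluctuationSum hα (by positivity) _

lemma fluctuationSum_le_rpow_one_sub (hα : 1 < α) {b : ℝ} (hb : 2⁻¹ ≤ b) :
    fluctuationSum α (b ^ α) ≤ (2 + 1 / (α - 1)) * b ^ (1 - α) := by
  have hb0 : 0 < b := by linarith
  have hα1 : 0 < α - 1 := by linarith
  calc fluctuationSum α (b ^ α) ≤ ⌈b⌉₊ / b ^ α + (⌈b⌉₊ : ℝ) ^ (1 - α) / (α - 1) :=
        fluctuationSum_le hα (by positivity) (Nat.ceil_pos.2 hb0)
    _ ≤ 2 * b / b ^ α + b ^ (1 - α) / (α - 1) := by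
        gcongr ?_ / _ + ?_ / _
        · exact Nat.ceil_le_two_mul hb
        · exact rpow_le_rpow_of_nonpos hb0 (Nat.le_ceil b) (by linarith)
    _ = (2 + 1 / (α - 1)) * b ^ (1 - α) := by
        rw [rpow_sub hb0, rpow_one]
        field_simp

end

/-- For `α > 1` and `a_j = j^{−α}`, the sum `∑_{j≥1} j^{−α}/(1 + β j^{−α})` is comparable to
`β^{−(α−1)/α}` for `β ≥ 1`. -/
theorem stmt11 (α : ℝ) (hα : 1 < α) :
    ∃ c C : ℝ, 0 < c ∧ 0 < C ∧ ∀ β : ℝ, 1 ≤ β →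
      c * β ^ (-(α - 1) / α) ≤
        (∑' j : ℕ+, (j : ℝ) ^ (-α) / (1 + β * (j : ℝ) ^ (-α))) ∧
      (∑' j : ℕ+, (j : ℝ) ^ (-α) / (1 + β * (j : ℝ) ^ (-α))) ≤
        C * β ^ (-(α - 1) / α) := by
  have hα1 : 0 < α - 1 := by linarith
  refine ⟨1 / (2 ^ α + 1), 2 + 1 / (α - 1), by positivity, by positivity, fun β hβ => ?_⟩
  have hβ0 : 0 < β := by linarith
  set b := β ^ α⁻¹
  have hb : 2⁻¹ ≤ b := le_trans (by norm_num) (one_le_rpow hβ (by positivity))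
  have hβb : β = b ^ α := (rpow_inv_rpow hβ0.le (by linarith)).symm
  have hexp : β ^ (-(α - 1) / α) = b ^ (1 - α) := by
    rw [← rpow_mul hβ0.le]
    congr 1
    field_simp
    ring
  have hsum : (∑' j : ℕ+, (j : ℝ) ^ (-α) / (1 + β * (j : ℝ) ^ (-α))) = fluctuationSum α β := by
    rw [tsum_pnat_eq_tsum_succ (f := fun j : ℕ => (j : ℝ) ^ (-α) / (1 + β * (j : ℝ) ^ (-α)))]
    exact tsum_congr fun n => rpow_neg_div_one_add_mul_rpow_neg (by positivity) α β
  rw [hsum, hexp, hβb, one_div_mul_eq_div]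
  exact ⟨rpow_one_sub_div_le_fluctuationSum hα hb, fluctuationSum_le_rpow_one_sub hα hb⟩
end

section
/- Let H be a Hilbert space, λ_j ≥ 0 a sequence, and for X ∈ ℓ² define (Λ(t)X)_j = λ_j e^{−λ_j t} X_j. Let G be a bounded positive semi-definite self-adjoint operator on ℓ² and Γ(t) = G^{1/2} Λ(t) G^{1/2}. Then Γ is a Volterra kernel of positive type: for any continuous ℓ²-valued function X on [0,T], ∫_0^T ∫_0^t ⟨X(t), Γ(t−s) X(s)⟩ ds dt ≥ 0. -/
open MeasureTheory Real intervalIntegral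
open scoped ENNReal NNReal
open Filter
set_option maxHeartbeats 1000000


section Aux

local notation "H" => lp (fun _ : ℕ => ℝ) 2

def SsetD : Set (ℝ × ℝ) := {q : ℝ × ℝ | q.2 ≤ q.1}

lemma mem_SsetD {q : ℝ × ℝ} : q ∈ SsetD ↔ q.2 ≤ q.1 := Iff.rfl

lemma SsetD_meas : MeasurableSet SsetD :=
  (isClosed_le continuous_snd continuous_fst).measurableSet

noncomputable def phiD (l : ℕ → ℝ) (Y : ℝ → lp (fun _ : ℕ => ℝ) 2) (j : ℕ) : ℝ × ℝ → ℝ :=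
  Set.indicator SsetD (fun q => l j * Real.exp (-(l j) * (q.1 - q.2)) * (Y q.1 j * Y q.2 j))

noncomputable def PhiD (l : ℕ → ℝ) (Y : ℝ → lp (fun _ : ℕ => ℝ) 2) : ℝ × ℝ → ℝ :=
  Set.indicator SsetD (fun q => ∑' j, l j * Real.exp (-(l j) * (q.1 - q.2)) * (Y q.1 j * Y q.2 j))

lemma keyPos (lam : ℝ) (hlam : 0 ≤ lam) (a : ℝ → ℝ) (ha : Continuous a)
    (T : ℝ) (hT : 0 ≤ T) :
    0 ≤ ∫ t in (0:ℝ)..T, ∫ s in (0:ℝ)..t,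
      lam * Real.exp (-lam * (t - s)) * (a t * a s) := by
  set w : ℝ → ℝ := fun t => ∫ s in (0:ℝ)..t, Real.exp (lam * s) * a s with hw_def
  have hcont_integrand : Continuous fun s => Real.exp (lam * s) * a s := by continuity
  have hw : ∀ t, HasDerivAt w (Real.exp (lam * t) * a t) t := by
    intro t
    exact intervalIntegral.integral_hasDerivAt_right
      (hcont_integrand.intervalIntegrable 0 t)
      hcont_integrand.aestronglyMeasurable.stronglyMeasurableAtFilter
      hcont_integrand.continuousAt
  have hwcont : Continuous w := by
    rw [continuous_iff_continuousAt]; exact fun t => (hw t).continuousAt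
  set z : ℝ → ℝ := fun t => Real.exp (-(lam * t)) * w t with hz_def
  have hzcont : Continuous z := (Real.continuous_exp.comp (continuous_const.mul continuous_id).neg).mul hwcont
  have hz : ∀ t, HasDerivAt z (a t - lam * z t) t := by
    intro t
    have h1 : HasDerivAt (fun t => Real.exp (-(lam * t)))
        (Real.exp (-(lam * t)) * -(lam * 1)) t :=
      HasDerivAt.exp (((hasDerivAt_id t).const_mul lam).neg)
    have h2 := h1.mul (hw t)
    have e : Real.exp (-(lam * t)) * Real.exp (lam * t) = 1 := by
      rw [← Real.exp_add, neg_add_cancel, Real.exp_zero]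
    refine h2.congr_deriv ?_
    simp only [hz_def]
    linear_combination (a t) * e
  have hz0 : z 0 = 0 := by simp [hz_def, hw_def]
  -- inner integral evaluates
  have hinner : ∀ t : ℝ, (∫ s in (0:ℝ)..t, lam * Real.exp (-lam * (t - s)) * (a t * a s))
      = lam * (a t * z t) := by
    intro t
    have : ∀ s : ℝ, lam * Real.exp (-lam * (t - s)) * (a t * a s)
        = (lam * a t * Real.exp (-(lam * t))) * (Real.exp (lam * s) * a s) := by
      intro s
      rw [show -lam * (t - s) = -(lam * t) + lam * s by ring, Real.exp_add]; ring
    rw [intervalIntegral.integral_congr (fun s _ => this s),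
      intervalIntegral.integral_const_mul]
    simp only [hz_def]
    ring
  rw [intervalIntegral.integral_congr (fun t _ => hinner t),
    intervalIntegral.integral_const_mul]
  -- now show 0 ≤ lam * ∫ a t * z t
  have hderiv2 : ∀ t, HasDerivAt (fun t => z t ^ 2 / 2) (a t * z t - lam * z t ^ 2) t := by
    intro t
    have := ((hz t).mul (hz t)).div_const 2
    exact (this.congr_deriv (by ring)).congr_of_eventuallyEq (Filter.Eventually.of_forall fun u => by simp only [Pi.mul_apply]; ring)
  have hintcont : Continuous fun t => a t * z t - lam * z t ^ 2 := by continuity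
  have hsub : (∫ t in (0:ℝ)..T, (a t * z t - lam * z t ^ 2))
      = z T ^ 2 / 2 - z 0 ^ 2 / 2 :=
    intervalIntegral.integral_eq_sub_of_hasDerivAt (fun t _ => hderiv2 t)
      (hintcont.intervalIntegrable 0 T)
  have hzsq : IntervalIntegrable (fun t => z t ^ 2) volume 0 T :=
    (hzcont.pow 2).intervalIntegrable 0 T
  have haz : IntervalIntegrable (fun t => a t * z t) volume 0 T :=
    (ha.mul hzcont).intervalIntegrable 0 T
  have hsplit : (∫ t in (0:ℝ)..T, (a t * z t - lam * z t ^ 2))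
      = (∫ t in (0:ℝ)..T, a t * z t) - lam * ∫ t in (0:ℝ)..T, z t ^ 2 := by
    rw [intervalIntegral.integral_sub haz (hzsq.const_mul lam),
      intervalIntegral.integral_const_mul]
  have hzsq_nonneg : 0 ≤ ∫ t in (0:ℝ)..T, z t ^ 2 :=
    intervalIntegral.integral_nonneg hT (fun t _ => sq_nonneg _)
  have : (∫ t in (0:ℝ)..T, a t * z t)
      = z T ^ 2 / 2 + lam * ∫ t in (0:ℝ)..T, z t ^ 2 := by
    rw [hsplit, hz0] at hsub; linarith
  rw [this]
  positivity

lemma indic_int (T : ℝ) (g : ℝ × ℝ → ℝ) (t : ℝ) (ht : t ∈ Set.Ioc (0:ℝ) T) :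
    (∫ s in Set.Ioc (0:ℝ) T, Set.indicator SsetD g (t, s))
      = ∫ s in (0:ℝ)..t, g (t, s) := by
  rw [intervalIntegral.integral_of_le ht.1.le]
  have h1 : ∀ s ∈ Set.Ioc (0:ℝ) T,
      Set.indicator SsetD g (t, s)
        = (Set.Ioc (0:ℝ) t).indicator (fun s => g (t, s)) s := by
    intro s hs
    by_cases hst : s ≤ t
    · rw [Set.indicator_of_mem (mem_SsetD.mpr hst),
        Set.indicator_of_mem (Set.mem_Ioc.mpr ⟨hs.1, hst⟩)]
    · rw [Set.indicator_of_notMem (fun hmem => hst (mem_SsetD.mp hmem)),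
        Set.indicator_of_notMem (fun hmem => hst (Set.mem_Ioc.mp hmem).2)]
  rw [setIntegral_congr_fun measurableSet_Ioc h1,
    setIntegral_indicator measurableSet_Ioc,
    Set.inter_eq_self_of_subset_right (Set.Ioc_subset_Ioc_right ht.2)]

lemma l2_exp_eq (x : ℝ) : x ^ (2 : ℝ≥0∞).toReal = x ^ 2 := by
  rw [show (2 : ℝ≥0∞).toReal = ((2:ℕ):ℝ) by norm_num, Real.rpow_natCast]

lemma l2_summable_sq (f : H) : Summable fun j => (f j) ^ 2 := by
  have h := (lp.memℓp f).summable (by norm_num)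
  refine h.congr fun j => ?_
  rw [l2_exp_eq]
  simp [Real.norm_eq_abs, sq_abs]

lemma l2_tsum_sq (f : H) : (∑' j, (f j) ^ 2) = ‖f‖ ^ 2 := by
  have h := lp.norm_rpow_eq_tsum (p := 2) (by norm_num) f
  rw [l2_exp_eq] at h
  rw [h]
  exact tsum_congr fun j => by rw [l2_exp_eq]; simp [Real.norm_eq_abs, sq_abs]

lemma coord_cont (Y : ℝ → H) (hY : Continuous Y) (j : ℕ) :
    Continuous fun t => Y t j := by
  have hlip : LipschitzWith 1 (fun f : H => f j) := by
    apply LipschitzWith.of_dist_le_mul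
    intro f g
    rw [dist_eq_norm, dist_eq_norm, NNReal.coe_one, one_mul]
    have : f j - g j = (f - g) j := by
      rw [lp.coeFn_sub]; simp
    rw [this]
    exact lp.norm_apply_le_norm (by norm_num) (f - g) j
  exact hlip.continuous.comp hY

lemma mainAux (l : ℕ → ℝ) (hl : ∀ j, 0 ≤ l j) (B : ℝ) (hB : ∀ j, l j ≤ B)
    (T : ℝ) (hT : 0 ≤ T) (Y : ℝ → H) (hY : Continuous Y)
    (C : ℝ) (hC0 : 0 ≤ C) (hC : ∀ t, ‖Y t‖ ≤ C) :
    0 ≤ ∫ t in (0:ℝ)..T, ∫ s in (0:ℝ)..t,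
        ∑' j, l j * Real.exp (-(l j) * (t - s)) * (Y t j * Y s j) := by
  have hB0 : 0 ≤ B := le_trans (hl 0) (hB 0)
  set μ : Measure (ℝ × ℝ) :=
    (volume.restrict (Set.Ioc (0:ℝ) T)).prod (volume.restrict (Set.Ioc (0:ℝ) T)) with hμ_def
  haveI : IsFiniteMeasure (volume.restrict (Set.Ioc (0:ℝ) T)) := by
    constructor
    rw [Measure.restrict_apply_univ, Real.volume_Ioc]
    exact ENNReal.ofReal_lt_top
  haveI : IsFiniteMeasure μ := by rw [hμ_def]; infer_instance
  have hΦ_tsum : ∀ p, PhiD l Y p = ∑' j, phiD l Y j p := by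
    intro p
    by_cases hp : p ∈ SsetD
    · rw [PhiD, Set.indicator_of_mem hp]
      refine tsum_congr fun j => ?_
      simp only [phiD]
      exact (Set.indicator_of_mem hp
        (fun q => l j * Real.exp (-(l j) * (q.1 - q.2)) * (Y q.1 j * Y q.2 j))).symm
    · rw [PhiD, Set.indicator_of_notMem hp]
      symm
      simp only [phiD, Set.indicator_of_notMem hp]
      exact tsum_zero
  -- continuity and measurability of the pieces
  have hycont : ∀ j, Continuous fun t => Y t j := coord_cont Y hY
  have hcont_j : ∀ j, Continuous fun q : ℝ × ℝ =>
      l j * Real.exp (-(l j) * (q.1 - q.2)) * (Y q.1 j * Y q.2 j) := by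
    intro j
    apply Continuous.mul
    · exact continuous_const.mul (Real.continuous_exp.comp
        (continuous_const.mul (continuous_fst.sub continuous_snd)))
    · exact ((hycont j).comp continuous_fst).mul ((hycont j).comp continuous_snd)
  have hφm : ∀ j, StronglyMeasurable (phiD l Y j) := fun j =>
    ((hcont_j j).stronglyMeasurable).indicator SsetD_meas
  -- pointwise bounds
  have hyC : ∀ j t, |Y t j| ≤ C := by
    intro j t
    have := lp.norm_apply_le_norm (by norm_num : (2:ℝ≥0∞) ≠ 0) (Y t) j
    rw [Real.norm_eq_abs] at this
    exact this.trans (hC t)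
  have hsq_sum : ∀ t, Summable fun j => (Y t j) ^ 2 := fun t => l2_summable_sq (Y t)
  have hsq_tsum_le : ∀ t, (∑' j, (Y t j) ^ 2) ≤ C ^ 2 := by
    intro t
    rw [l2_tsum_sq (Y t)]
    exact pow_le_pow_left₀ (norm_nonneg _) (hC t) 2
  have hφle : ∀ j p, |phiD l Y j p| ≤ (B / 2) * ((Y p.1 j) ^ 2 + (Y p.2 j) ^ 2) := by
    intro j p
    by_cases hp : p ∈ SsetD
    · rw [phiD, Set.indicator_of_mem hp]
      have hexp : Real.exp (-(l j) * (p.1 - p.2)) ≤ 1 := by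
        rw [Real.exp_le_one_iff]
        have : (0:ℝ) ≤ p.1 - p.2 := sub_nonneg.2 (mem_SsetD.mp hp)
        nlinarith [hl j]
      have hexp0 : 0 < Real.exp (-(l j) * (p.1 - p.2)) := Real.exp_pos _
      have h1 : |Y p.1 j * Y p.2 j| ≤ ((Y p.1 j) ^ 2 + (Y p.2 j) ^ 2) / 2 := by
        rw [abs_mul]
        nlinarith [sq_abs (Y p.1 j), sq_abs (Y p.2 j),
          sq_nonneg (|Y p.1 j| - |Y p.2 j|), abs_nonneg (Y p.1 j), abs_nonneg (Y p.2 j)]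
      rw [abs_mul, abs_mul, abs_of_nonneg (hl j), abs_of_pos hexp0]
      have hlB := hB j
      have hlj := hl j
      have he1 : l j * Real.exp (-(l j) * (p.1 - p.2)) ≤ B := by nlinarith
      calc l j * Real.exp (-(l j) * (p.1 - p.2)) * |Y p.1 j * Y p.2 j|
          ≤ B * |Y p.1 j * Y p.2 j| :=
            mul_le_mul_of_nonneg_right he1 (abs_nonneg _)
        _ ≤ B * ((Y p.1 j ^ 2 + Y p.2 j ^ 2) / 2) :=
            mul_le_mul_of_nonneg_left h1 hB0
        _ = (B / 2) * (Y p.1 j ^ 2 + Y p.2 j ^ 2) := by ring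
    · rw [phiD, Set.indicator_of_notMem hp, abs_zero]
      positivity
  have hbound_summable : ∀ p : ℝ × ℝ,
      Summable fun j => (B / 2) * ((Y p.1 j) ^ 2 + (Y p.2 j) ^ 2) :=
    fun p => (((hsq_sum p.1).add (hsq_sum p.2)).mul_left (B / 2))
  have hφabs_summable : ∀ p, Summable fun j => |phiD l Y j p| := by
    intro p
    exact Summable.of_nonneg_of_le (fun j => abs_nonneg _) (fun j => hφle j p)
      (hbound_summable p)
  have hφsummable : ∀ p, Summable fun j => phiD l Y j p := fun p => (hφabs_summable p).of_abs
  -- measurability of Φ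
  have hΦm : StronglyMeasurable (PhiD l Y) := by
    refine stronglyMeasurable_of_tendsto (Filter.atTop : Filter ℕ)
      (f := fun n p => ∑ j ∈ Finset.range n, phiD l Y j p)
      (fun n => Finset.stronglyMeasurable_fun_sum _ fun j _ => hφm j) ?_
    rw [tendsto_pi_nhds]
    intro p
    rw [hΦ_tsum p]
    exact (hφsummable p).hasSum.tendsto_sum_nat
  -- uniform bound for Φ
  have hΦbound : ∀ p, |PhiD l Y p| ≤ B * C ^ 2 := by
    intro p
    rw [hΦ_tsum p]
    calc |∑' j, phiD l Y j p| ≤ ∑' j, |phiD l Y j p| := by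
          have hn := norm_tsum_le_tsum_norm (f := fun j => phiD l Y j p)
            (by simpa [Real.norm_eq_abs] using hφabs_summable p)
          simpa [Real.norm_eq_abs] using hn
      _ ≤ ∑' j, (B / 2) * ((Y p.1 j) ^ 2 + (Y p.2 j) ^ 2) :=
          Summable.tsum_le_tsum (fun j => hφle j p) (hφabs_summable p) (hbound_summable p)
      _ = (B / 2) * ((∑' j, (Y p.1 j) ^ 2) + ∑' j, (Y p.2 j) ^ 2) := by
          rw [tsum_mul_left, Summable.tsum_add (hsq_sum p.1) (hsq_sum p.2)]
      _ ≤ (B / 2) * (C ^ 2 + C ^ 2) := by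
          have h1 := hsq_tsum_le p.1
          have h2 := hsq_tsum_le p.2
          nlinarith
      _ = B * C ^ 2 := by ring
  -- integrability
  have hφint : ∀ j, Integrable (phiD l Y j) μ := by
    intro j
    apply Integrable.mono' (integrable_const (B * C ^ 2)) (hφm j).aestronglyMeasurable
    refine ae_of_all _ fun p => ?_
    rw [Real.norm_eq_abs]
    calc |phiD l Y j p| ≤ (B / 2) * ((Y p.1 j) ^ 2 + (Y p.2 j) ^ 2) := hφle j p
      _ ≤ B * C ^ 2 := by
          have h1 : (Y p.1 j) ^ 2 ≤ C ^ 2 := by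
            rw [← sq_abs]; exact pow_le_pow_left₀ (abs_nonneg _) (hyC j p.1) 2
          have h2 : (Y p.2 j) ^ 2 ≤ C ^ 2 := by
            rw [← sq_abs]; exact pow_le_pow_left₀ (abs_nonneg _) (hyC j p.2) 2
          nlinarith
  have hΦint : Integrable (PhiD l Y) μ := by
    apply Integrable.mono' (integrable_const (B * C ^ 2)) hΦm.aestronglyMeasurable
    exact ae_of_all _ fun p => by rw [Real.norm_eq_abs]; exact hΦbound p
  -- the coordinate-square integrals and their summability
  set c : ℕ → ℝ := fun j => ∫ t in Set.Ioc (0:ℝ) T, (Y t j) ^ 2 with hc_def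
  have hTvol : (∫ _ in Set.Ioc (0:ℝ) T, (1:ℝ)) = T := by
    simp [Real.volume_Ioc, ENNReal.toReal_ofReal hT, hT]
  have hsqint : ∀ j, Integrable (fun t => (Y t j) ^ 2) (volume.restrict (Set.Ioc (0:ℝ) T)) :=
    fun j => (Continuous.integrableOn_Ioc ((hycont j).pow 2))
  have hc_nonneg : ∀ j, 0 ≤ c j := fun j =>
    setIntegral_nonneg measurableSet_Ioc fun t _ => sq_nonneg _
  have hc_summable : Summable c := by
    apply summable_of_sum_range_le hc_nonneg (c := T * C ^ 2)
    intro n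
    rw [hc_def]
    rw [← integral_finset_sum _ (fun j _ => hsqint j)]
    calc (∫ t in Set.Ioc (0:ℝ) T, ∑ j ∈ Finset.range n, (Y t j) ^ 2)
        ≤ ∫ _ in Set.Ioc (0:ℝ) T, C ^ 2 := by
          apply integral_mono (integrable_finset_sum _ (fun j _ => hsqint j))
            (integrable_const _)
          intro t
          calc ∑ j ∈ Finset.range n, (Y t j) ^ 2
              ≤ ∑' j, (Y t j) ^ 2 :=
                Summable.sum_le_tsum _ (fun j _ => sq_nonneg _) (hsq_sum t)
            _ ≤ C ^ 2 := hsq_tsum_le t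
      _ = T * C ^ 2 := by
          rw [show (fun _ : ℝ => C ^ 2) = fun t : ℝ => C ^ 2 * 1 from funext fun _ => by ring]
          rw [MeasureTheory.integral_const_mul, hTvol]; ring
  -- summability of the integrals of norms
  have hint_norm_le : ∀ j, (∫ p, ‖phiD l Y j p‖ ∂μ) ≤ (B * T) * c j := by
    intro j
    have hprod1 : (∫ p, (Y p.1 j) ^ 2 ∂μ) = c j * T := by
      have := integral_prod_mul (μ := volume.restrict (Set.Ioc (0:ℝ) T))
        (ν := volume.restrict (Set.Ioc (0:ℝ) T))
        (f := fun t => (Y t j) ^ 2) (g := fun _ => (1:ℝ))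
      simpa [hTvol] using this
    have hprod2 : (∫ p, (Y p.2 j) ^ 2 ∂μ) = T * c j := by
      have := integral_prod_mul (μ := volume.restrict (Set.Ioc (0:ℝ) T))
        (ν := volume.restrict (Set.Ioc (0:ℝ) T))
        (f := fun _ => (1:ℝ)) (g := fun t => (Y t j) ^ 2)
      simpa [hTvol] using this
    have hint1 : Integrable (fun p : ℝ × ℝ => (Y p.1 j) ^ 2) μ := by
      apply Integrable.mono' (integrable_const (C ^ 2))
        (((hycont j).comp continuous_fst).pow 2).aestronglyMeasurable
      refine ae_of_all _ fun p => ?_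
      rw [Real.norm_eq_abs, abs_of_nonneg (sq_nonneg _)]
      exact (pow_le_pow_left₀ (abs_nonneg _) (hyC j p.1) 2).trans_eq' (sq_abs (Y p.1 j))
    have hint2 : Integrable (fun p : ℝ × ℝ => (Y p.2 j) ^ 2) μ := by
      apply Integrable.mono' (integrable_const (C ^ 2))
        (((hycont j).comp continuous_snd).pow 2).aestronglyMeasurable
      refine ae_of_all _ fun p => ?_
      rw [Real.norm_eq_abs, abs_of_nonneg (sq_nonneg _)]
      exact (pow_le_pow_left₀ (abs_nonneg _) (hyC j p.2) 2).trans_eq' (sq_abs (Y p.2 j))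
    calc (∫ p, ‖phiD l Y j p‖ ∂μ)
        ≤ ∫ p, (B / 2) * ((Y p.1 j) ^ 2 + (Y p.2 j) ^ 2) ∂μ := by
          have hint12 : Integrable (fun p : ℝ × ℝ =>
              (B / 2) * ((Y p.1 j) ^ 2 + (Y p.2 j) ^ 2)) μ := by
            simpa using ((hint1.add hint2)).const_mul (B / 2)
          apply integral_mono (hφint j).norm hint12
          intro p
          simpa [Real.norm_eq_abs] using hφle j p
      _ = (B / 2) * ((∫ p, (Y p.1 j) ^ 2 ∂μ) + ∫ p, (Y p.2 j) ^ 2 ∂μ) := by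
          rw [MeasureTheory.integral_const_mul, integral_add hint1 hint2]
      _ = (B * T) * c j := by rw [hprod1, hprod2]; ring
  have hsummable_int : Summable fun j => ∫ p, ‖phiD l Y j p‖ ∂μ := by
    apply Summable.of_nonneg_of_le
      (fun j => integral_nonneg fun p => norm_nonneg _) hint_norm_le
    exact hc_summable.mul_left (B * T)
  -- the main chain of equalities
  have step1 : (∫ t in (0:ℝ)..T, ∫ s in (0:ℝ)..t,
      ∑' j, l j * Real.exp (-(l j) * (t - s)) * (Y t j * Y s j))
      = ∫ t in Set.Ioc (0:ℝ) T, ∫ s in Set.Ioc (0:ℝ) T, PhiD l Y (t, s) := by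
    rw [intervalIntegral.integral_of_le hT]
    apply setIntegral_congr_fun measurableSet_Ioc
    intro t ht
    simp only [PhiD]
    exact (indic_int T
      (fun q => ∑' (j : ℕ), l j * Real.exp (-(l j) * (q.1 - q.2)) * (Y q.1 j * Y q.2 j))
      t ht).symm
  have step2 : (∫ t in Set.Ioc (0:ℝ) T, ∫ s in Set.Ioc (0:ℝ) T, PhiD l Y (t, s))
      = ∫ p, PhiD l Y p ∂μ := by
    rw [hμ_def]
    exact integral_integral (f := fun t s => PhiD l Y (t, s))
      (μ := volume.restrict (Set.Ioc (0:ℝ) T)) (ν := volume.restrict (Set.Ioc (0:ℝ) T)) hΦint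
  have step3 : (∫ p, PhiD l Y p ∂μ) = ∑' j, ∫ p, phiD l Y j p ∂μ := by
    rw [show PhiD l Y = fun p => ∑' j, phiD l Y j p from funext hΦ_tsum]
    exact (integral_tsum_of_summable_integral_norm hφint hsummable_int).symm
  rw [step1, step2, step3]
  apply tsum_nonneg
  intro j
  have hterm : (∫ p, phiD l Y j p ∂μ)
      = ∫ t in (0:ℝ)..T, ∫ s in (0:ℝ)..t,
          l j * Real.exp (-(l j) * (t - s)) * (Y t j * Y s j) := by
    have h1 : (∫ p, phiD l Y j p ∂μ)
        = ∫ t in Set.Ioc (0:ℝ) T, ∫ s in Set.Ioc (0:ℝ) T, phiD l Y j (t, s) := by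
      rw [hμ_def]
      exact (integral_integral (f := fun t s => phiD l Y j (t, s))
        (μ := volume.restrict (Set.Ioc (0:ℝ) T)) (ν := volume.restrict (Set.Ioc (0:ℝ) T))
        (hφint j)).symm
    rw [h1, intervalIntegral.integral_of_le hT]
    apply setIntegral_congr_fun measurableSet_Ioc
    intro t ht
    simp only [phiD]
    exact indic_int T
      (fun q => l j * Real.exp (-(l j) * (q.1 - q.2)) * (Y q.1 j * Y q.2 j)) t ht
  rw [hterm]
  exact keyPos (l j) (hl j) (fun t => Y t j) (hycont j) T hT

end Aux

/-- `Γ(t) = G^{1/2} Λ(t) G^{1/2}` is a Volterra kernel of positive type: for any continuous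
`ℓ²`-valued `X` on `[0,T]`, `∫_0^T ∫_0^t ⟨X(t), Γ(t−s) X(s)⟩ ds dt ≥ 0`. -/
theorem stmt12 (l : ℕ → ℝ) (hl : ∀ j, 0 ≤ l j)
    (Λ : ℝ → lp (fun _ : ℕ => ℝ) 2 →L[ℝ] lp (fun _ : ℕ => ℝ) 2)
    (hΛ : ∀ (t : ℝ) (X : lp (fun _ : ℕ => ℝ) 2) (j : ℕ),
      Λ t X j = l j * Real.exp (-(l j) * t) * X j)
    (G S : lp (fun _ : ℕ => ℝ) 2 →L[ℝ] lp (fun _ : ℕ => ℝ) 2)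
    (hGsa : IsSelfAdjoint G) (hGpos : ∀ X, 0 ≤ (inner ℝ X (G X) : ℝ))
    (hSsa : IsSelfAdjoint S) (hSpos : ∀ X, 0 ≤ (inner ℝ X (S X) : ℝ))
    (hS2 : S ∘L S = G)
    (T : ℝ) (hT : 0 ≤ T) (X : ℝ → lp (fun _ : ℕ => ℝ) 2)
    (hX : ContinuousOn X (Set.Icc 0 T)) :
    0 ≤ ∫ t in (0:ℝ)..T, ∫ s in (0:ℝ)..t,
          (inner ℝ (X t) (S (Λ (t - s) (S (X s)))) : ℝ) := by
  classical
  set cl : ℝ → ℝ := fun t => max 0 (min t T) with hcl_def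
  have hclcont : Continuous cl := continuous_const.max (continuous_id.min continuous_const)
  have hclmem : ∀ t, cl t ∈ Set.Icc 0 T := fun t =>
    ⟨le_max_left _ _, max_le hT (min_le_right t T)⟩
  have hcl_eq : ∀ t ∈ Set.Icc (0:ℝ) T, cl t = t := by
    intro t ht
    rw [hcl_def]
    simp only
    rw [min_eq_left ht.2, max_eq_right ht.1]
  set Y : ℝ → lp (fun _ : ℕ => ℝ) 2 := fun t => S (X (cl t)) with hY_def
  have hYcont : Continuous Y := S.continuous.comp (hX.comp_continuous hclcont hclmem)
  have hYeq : ∀ t ∈ Set.Icc (0:ℝ) T, Y t = S (X t) := by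
    intro t ht
    rw [hY_def]
    simp only
    rw [hcl_eq t ht]
  obtain ⟨C0, hC0⟩ := (isCompact_Icc (a := (0:ℝ)) (b := T)).exists_bound_of_continuousOn
    hYcont.continuousOn
  set C : ℝ := max C0 0 with hC_def
  have hC : ∀ t, ‖Y t‖ ≤ C := by
    intro t
    have h1 : Y t = Y (cl t) := by
      rw [hY_def]
      simp only
      rw [hcl_eq (cl t) (hclmem t)]
    rw [h1]
    exact (hC0 (cl t) (hclmem t)).trans (le_max_left _ _)
  set B : ℝ := ‖Λ 0‖ with hB_def
  have hB : ∀ j, l j ≤ B := by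
    intro j
    have h1 : (Λ 0 (lp.single 2 j (1:ℝ))) j = l j := by
      rw [hΛ]
      simp [lp.single_apply_self]
    have h2 : |(Λ 0 (lp.single 2 j (1:ℝ))) j| ≤ ‖Λ 0 (lp.single 2 j (1:ℝ))‖ := by
      simpa [Real.norm_eq_abs] using
        lp.norm_apply_le_norm (by norm_num : (2:ℝ≥0∞) ≠ 0) (Λ 0 (lp.single 2 j (1:ℝ))) j
    have h3 : ‖Λ 0 (lp.single 2 j (1:ℝ))‖ ≤ ‖Λ 0‖ * ‖(lp.single 2 j (1:ℝ) : lp (fun _ : ℕ => ℝ) 2)‖ :=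
      (Λ 0).le_opNorm _
    have h4 : ‖(lp.single 2 j (1:ℝ) : lp (fun _ : ℕ => ℝ) 2)‖ = 1 := by
      have := lp.norm_single (p := 2) (E := fun _ : ℕ => ℝ) (by norm_num) j (1:ℝ)
      simpa using this
    rw [h4, mul_one] at h3
    calc l j ≤ |l j| := le_abs_self _
      _ = |(Λ 0 (lp.single 2 j (1:ℝ))) j| := by rw [h1]
      _ ≤ B := h2.trans h3
  have key := mainAux l hl B hB T hT Y hYcont C (le_max_right _ _) hC
  refine le_trans key (le_of_eq ?_)
  apply intervalIntegral.integral_congr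
  intro t ht
  rw [Set.uIcc_of_le hT] at ht
  apply intervalIntegral.integral_congr
  intro s hs
  rw [Set.uIcc_of_le ht.1] at hs
  have hsT : s ∈ Set.Icc (0:ℝ) T := ⟨hs.1, hs.2.trans ht.2⟩
  have hSsa' : ContinuousLinearMap.adjoint S = S :=
    (ContinuousLinearMap.isSelfAdjoint_iff').mp hSsa
  have e2 : Y t = S (X t) := hYeq t ht
  have e3 : Y s = S (X s) := hYeq s hsT
  have hR : (inner ℝ (X t) (S (Λ (t - s) (S (X s)))) : ℝ)
      = ∑' j, (inner ℝ ((Y t : lp (fun _ : ℕ => ℝ) 2) j) ((Λ (t - s) (Y s)) j) : ℝ) := by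
    rw [← e3]
    have e1 : (inner ℝ (X t) (S (Λ (t - s) (Y s))) : ℝ)
        = inner ℝ (S (X t)) (Λ (t - s) (Y s)) := by
      conv_lhs => rw [← hSsa']
      exact ContinuousLinearMap.adjoint_inner_right S (X t) (Λ (t - s) (Y s))
    rw [e1, ← e2]
    exact lp.inner_eq_tsum (Y t) (Λ (t - s) (Y s))
  refine Eq.trans ?_ hR.symm
  apply tsum_congr
  intro j
  rw [hΛ (t - s) (Y s) j]
  simp only [RCLike.inner_apply, starRingEnd_apply, star_trivial]
  ring
end

section
/- With Γ(t) = G^{1/2} Λ(t) G^{1/2} as above and λ_j ≥ 0, for any continuous ℓ²-valued X, setting q_j(t) = ∫_0^t e^{λ_j s} (G^{1/2} X(s))_j ds, one has the identity ∫_0^T ∫_0^t ⟨X(t), Γ(t−s)X(s)⟩ ds dt = (1/2) ∑_j λ_j e^{−2λ_j T} q_j(T)² + ∫_0^T ∑_j λ_j² e^{−2λ_j t} q_j(t)² dt. -/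
open MeasureTheory Real intervalIntegral

lemma evalCont (j : ℕ) : Continuous fun v : lp (fun _ : ℕ => ℝ) 2 => v j := by
  refine (LipschitzWith.mk_one fun v w => ?_).continuous
  rw [dist_eq_norm, dist_eq_norm]
  have h := lp.norm_apply_le_norm (p := 2) (by norm_num) (v - w) j
  simpa using h

lemma qCont (lam : ℝ) (y : ℝ → ℝ) (hy : Continuous y) :
    Continuous fun t => ∫ s in (0:ℝ)..t, Real.exp (lam * s) * y s := by
  have hyc : Continuous fun s => Real.exp (lam * s) * y s :=
    (Real.continuous_exp.comp (continuous_const.mul continuous_id)).mul hy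
  exact continuous_iff_continuousAt.2 fun t =>
    (hyc.integral_hasStrictDerivAt 0 t).hasDerivAt.continuousAt

lemma key (lam T : ℝ) (y : ℝ → ℝ) (hy : Continuous y) :
    (∫ t in (0:ℝ)..T, (y t * lam * Real.exp (-lam * t)) *
        (∫ s in (0:ℝ)..t, Real.exp (lam * s) * y s))
    = 1/2 * (lam * Real.exp (-2*lam*T) * (∫ s in (0:ℝ)..T, Real.exp (lam * s) * y s)^2)
      + ∫ t in (0:ℝ)..T, lam^2 * Real.exp (-2*lam*t) *
          (∫ s in (0:ℝ)..t, Real.exp (lam * s) * y s)^2 := by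
  set q : ℝ → ℝ := fun t => ∫ s in (0:ℝ)..t, Real.exp (lam * s) * y s with hqdef
  have hyc : Continuous fun s => Real.exp (lam * s) * y s :=
    (Real.continuous_exp.comp (continuous_const.mul continuous_id)).mul hy
  have hq : ∀ t, HasDerivAt q (Real.exp (lam * t) * y t) t := fun t =>
    (hyc.integral_hasStrictDerivAt 0 t).hasDerivAt
  have hqc : Continuous q := qCont lam y hy
  have hec : Continuous fun t => Real.exp (-2*lam*t) :=
    Real.continuous_exp.comp (continuous_const.mul continuous_id)
  set F : ℝ → ℝ := fun t => lam/2 * Real.exp (-2*lam*t) * (q t)^2 with hFdef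
  have hF : ∀ t, HasDerivAt F
      (y t * lam * Real.exp (-lam * t) * q t - lam^2 * Real.exp (-2*lam*t) * (q t)^2) t := by
    intro t
    have h1 : HasDerivAt (fun t => Real.exp (-2*lam*t)) (-2*lam * Real.exp (-2*lam*t)) t := by
      simpa [mul_comm] using (((hasDerivAt_id t).const_mul (-2*lam)).exp)
    have h2 : HasDerivAt (fun t => (q t)^2) (2 * q t * (Real.exp (lam * t) * y t)) t := by
      simpa using (hq t).fun_pow 2
    have hd := ((h1.fun_mul h2).const_mul (lam/2))
    have heq : (fun u => lam/2 * (Real.exp (-2*lam*u) * q u ^ 2)) = F := by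
      funext u; rw [hFdef]; ring
    rw [heq] at hd
    refine hd.congr_deriv ?_
    have he : Real.exp (-2*lam*t) * Real.exp (lam*t) = Real.exp (-lam*t) := by
      rw [← Real.exp_add]; ring_nf
    linear_combination (lam * q t * y t) * he
  have hint1 : IntervalIntegrable
      (fun t => y t * lam * Real.exp (-lam * t) * q t - lam^2 * Real.exp (-2*lam*t) * (q t)^2)
      volume 0 T := by
    apply Continuous.intervalIntegrable
    fun_prop
  have hftc : (∫ t in (0:ℝ)..T,
      (y t * lam * Real.exp (-lam * t) * q t - lam^2 * Real.exp (-2*lam*t) * (q t)^2))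
      = F T - F 0 :=
    intervalIntegral.integral_eq_sub_of_hasDerivAt (fun t _ => hF t) hint1
  have hq0 : q 0 = 0 := intervalIntegral.integral_same
  have hint2 : IntervalIntegrable (fun t => lam^2 * Real.exp (-2*lam*t) * (q t)^2)
      volume 0 T := by
    apply Continuous.intervalIntegrable; fun_prop
  have hsplit := intervalIntegral.integral_sub
    (by apply Continuous.intervalIntegrable; fun_prop :
      IntervalIntegrable (fun t => y t * lam * Real.exp (-lam * t) * q t) volume 0 T) hint2
  rw [hsplit] at hftc
  have : (∫ t in (0:ℝ)..T, y t * lam * Real.exp (-lam * t) * q t)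
      = F T - F 0 + ∫ t in (0:ℝ)..T, lam^2 * Real.exp (-2*lam*t) * (q t)^2 := by
    linarith
  calc (∫ t in (0:ℝ)..T, (y t * lam * Real.exp (-lam * t)) * q t)
      = F T - F 0 + ∫ t in (0:ℝ)..T, lam^2 * Real.exp (-2*lam*t) * (q t)^2 := this
    _ = _ := by
        rw [hFdef]
        simp [hq0]
        ring_nf
        simp only [hqdef]

/-- Explicit identity for the positive-type quadratic form of `Γ(t) = G^{1/2}Λ(t)G^{1/2}`:
with `q_j(t) = ∫_0^t e^{λ_j s}(G^{1/2}X(s))_j ds`,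
`∫_0^T ∫_0^t ⟨X(t), Γ(t−s)X(s)⟩ ds dt
  = ½ ∑_j λ_j e^{−2λ_j T} q_j(T)² + ∫_0^T ∑_j λ_j² e^{−2λ_j t} q_j(t)² dt`. -/
theorem stmt13 (l : ℕ → ℝ) (hl : ∀ j, 0 ≤ l j) (hfin : (Function.support l).Finite)
    (Λ : ℝ → lp (fun _ : ℕ => ℝ) 2 →L[ℝ] lp (fun _ : ℕ => ℝ) 2)
    (hΛ : ∀ (t : ℝ) (X : lp (fun _ : ℕ => ℝ) 2) (j : ℕ),
      Λ t X j = l j * Real.exp (-(l j) * t) * X j)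
    (G S : lp (fun _ : ℕ => ℝ) 2 →L[ℝ] lp (fun _ : ℕ => ℝ) 2)
    (hGsa : IsSelfAdjoint G) (hGpos : ∀ X, 0 ≤ (inner ℝ X (G X) : ℝ))
    (hSsa : IsSelfAdjoint S) (hSpos : ∀ X, 0 ≤ (inner ℝ X (S X) : ℝ))
    (hS2 : S ∘L S = G)
    (T : ℝ) (hT : 0 ≤ T) (X : ℝ → lp (fun _ : ℕ => ℝ) 2)
    (hX : ContinuousOn X (Set.Icc 0 T)) :
    ∫ t in (0:ℝ)..T, ∫ s in (0:ℝ)..t, (inner ℝ (X t) (S (Λ (t - s) (S (X s)))) : ℝ)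
      = (1 / 2) * (∑' j : ℕ, l j * Real.exp (-2 * l j * T) *
            (∫ s in (0:ℝ)..T, Real.exp (l j * s) * S (X s) j) ^ 2)
        + ∫ t in (0:ℝ)..T, ∑' j : ℕ, (l j) ^ 2 * Real.exp (-2 * l j * t) *
            (∫ s in (0:ℝ)..t, Real.exp (l j * s) * S (X s) j) ^ 2 := by
  classical
  set F := hfin.toFinset with hFdef
  have hFmem : ∀ j, j ∉ F → l j = 0 := by
    intro j hj
    by_contra h
    exact hj (hfin.mem_toFinset.2 h)
  set Z : ℝ → lp (fun _ : ℕ => ℝ) 2 :=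
    fun t => S ((Set.Icc (0:ℝ) T).restrict X (Set.projIcc 0 T hT t)) with hZdef
  have hZc : Continuous Z :=
    S.continuous.comp (hX.restrict.comp continuous_projIcc)
  have hZeq : ∀ t ∈ Set.Icc (0:ℝ) T, Z t = S (X t) := by
    intro t ht
    simp [hZdef, Set.projIcc_of_mem hT ht]
    rfl
  set y : ℕ → ℝ → ℝ := fun j t => Z t j with hydef
  have hyc : ∀ j, Continuous (y j) := fun j => (evalCont j).comp hZc
  set q : ℕ → ℝ → ℝ := fun j t => ∫ s in (0:ℝ)..t, Real.exp (l j * s) * y j s with hqdef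
  have hqc : ∀ j, Continuous (q j) := fun j => qCont (l j) (y j) (hyc j)
  -- rewriting the q-integrals
  have hqeq : ∀ j, ∀ t ∈ Set.Icc (0:ℝ) T,
      (∫ s in (0:ℝ)..t, Real.exp (l j * s) * S (X s) j) = q j t := by
    intro j t ht
    apply intervalIntegral.integral_congr
    intro s hs
    rw [Set.uIcc_of_le ht.1] at hs
    have hsT : s ∈ Set.Icc (0:ℝ) T := ⟨hs.1, hs.2.trans ht.2⟩
    simp only [hydef]
    rw [hZeq s hsT]
  -- inner product expansion
  have hinner : ∀ t ∈ Set.Icc (0:ℝ) T, ∀ s ∈ Set.Icc (0:ℝ) t,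
      (inner ℝ (X t) (S (Λ (t - s) (S (X s)))) : ℝ)
        = ∑ j ∈ F, y j t * (l j * Real.exp (-(l j) * (t - s)) * y j s) := by
    intro t ht s hs
    have hsT : s ∈ Set.Icc (0:ℝ) T := ⟨hs.1, hs.2.trans ht.2⟩
    have h1 : (inner ℝ (X t) (S (Λ (t - s) (S (X s)))) : ℝ)
        = inner ℝ (S (X t)) (Λ (t - s) (S (X s))) :=
      (hSsa.isSymmetric (X t) (Λ (t - s) (S (X s)))).symm
    rw [h1, ← hZeq t ht, ← hZeq s hsT]
    rw [lp.inner_eq_tsum]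
    have hterm : ∀ j : ℕ, (inner ℝ (Z t j) ((Λ (t - s) (Z s)) j) : ℝ)
        = y j t * (l j * Real.exp (-(l j) * (t - s)) * y j s) := by
      intro j
      rw [hΛ]
      simp [RCLike.inner_apply, hydef]
      ring
    rw [tsum_congr hterm]
    apply tsum_eq_sum
    intro j hj
    rw [hFmem j hj]
    ring
  -- the inner integral for each t
  have hinner_int : ∀ t ∈ Set.Icc (0:ℝ) T,
      (∫ s in (0:ℝ)..t, (inner ℝ (X t) (S (Λ (t - s) (S (X s)))) : ℝ))
        = ∑ j ∈ F, (y j t * l j * Real.exp (-(l j) * t)) * q j t := by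
    intro t ht
    have step1 : (∫ s in (0:ℝ)..t, (inner ℝ (X t) (S (Λ (t - s) (S (X s)))) : ℝ))
        = ∫ s in (0:ℝ)..t, ∑ j ∈ F, y j t * (l j * Real.exp (-(l j) * (t - s)) * y j s) := by
      apply intervalIntegral.integral_congr
      intro s hs
      rw [Set.uIcc_of_le ht.1] at hs
      exact hinner t ht s hs
    rw [step1, intervalIntegral.integral_finset_sum]
    · apply Finset.sum_congr rfl
      intro j _
      have hrw : ∀ s, y j t * (l j * Real.exp (-(l j) * (t - s)) * y j s)
          = (y j t * l j * Real.exp (-(l j) * t)) * (Real.exp (l j * s) * y j s) := by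
        intro s
        rw [show -(l j) * (t - s) = -(l j) * t + l j * s by ring, Real.exp_add]
        ring
      simp only [hrw]
      rw [intervalIntegral.integral_const_mul]
    · intro j _
      apply Continuous.intervalIntegrable
      have := hyc j
      fun_prop
  -- main computation
  have hmain : (∫ t in (0:ℝ)..T, ∫ s in (0:ℝ)..t, (inner ℝ (X t) (S (Λ (t - s) (S (X s)))) : ℝ))
      = ∑ j ∈ F, ∫ t in (0:ℝ)..T, (y j t * l j * Real.exp (-(l j) * t)) * q j t := by
    rw [show (∫ t in (0:ℝ)..T, ∫ s in (0:ℝ)..t, (inner ℝ (X t) (S (Λ (t - s) (S (X s)))) : ℝ))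
        = ∫ t in (0:ℝ)..T, ∑ j ∈ F, (y j t * l j * Real.exp (-(l j) * t)) * q j t from
      intervalIntegral.integral_congr fun t ht => by
        rw [Set.uIcc_of_le hT] at ht
        exact hinner_int t ht]
    apply intervalIntegral.integral_finset_sum
    intro j _
    apply Continuous.intervalIntegrable
    have h1 := hyc j
    have h2 := hqc j
    fun_prop
  rw [hmain]
  have hkey : ∀ j ∈ F, (∫ t in (0:ℝ)..T, (y j t * l j * Real.exp (-(l j) * t)) * q j t)
      = 1/2 * (l j * Real.exp (-2*(l j)*T) * (q j T)^2)
        + ∫ t in (0:ℝ)..T, (l j)^2 * Real.exp (-2*(l j)*t) * (q j t)^2 := fun j _ =>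
    key (l j) T (y j) (hyc j)
  rw [Finset.sum_congr rfl hkey, Finset.sum_add_distrib]
  -- RHS rewriting
  have hrhs1 : (∑' j : ℕ, l j * Real.exp (-2 * l j * T) *
      (∫ s in (0:ℝ)..T, Real.exp (l j * s) * S (X s) j) ^ 2)
      = ∑ j ∈ F, l j * Real.exp (-2 * l j * T) * (q j T) ^ 2 := by
    rw [tsum_eq_sum (s := F) (by intro j hj; rw [hFmem j hj]; ring)]
    apply Finset.sum_congr rfl
    intro j _
    rw [hqeq j T ⟨le_refl 0 |>.trans hT, le_refl T⟩]
  have hrhs2 : (∫ t in (0:ℝ)..T, ∑' j : ℕ, (l j) ^ 2 * Real.exp (-2 * l j * t) *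
      (∫ s in (0:ℝ)..t, Real.exp (l j * s) * S (X s) j) ^ 2)
      = ∑ j ∈ F, ∫ t in (0:ℝ)..T, (l j)^2 * Real.exp (-2*(l j)*t) * (q j t)^2 := by
    rw [show (∫ t in (0:ℝ)..T, ∑' j : ℕ, (l j) ^ 2 * Real.exp (-2 * l j * t) *
        (∫ s in (0:ℝ)..t, Real.exp (l j * s) * S (X s) j) ^ 2)
        = ∫ t in (0:ℝ)..T, ∑ j ∈ F, (l j)^2 * Real.exp (-2*(l j)*t) * (q j t)^2 from
      intervalIntegral.integral_congr fun t ht => by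
        rw [Set.uIcc_of_le hT] at ht
        rw [tsum_eq_sum (s := F) (by intro j hj; rw [hFmem j hj]; ring)]
        exact Finset.sum_congr rfl fun j _ => by rw [hqeq j t ht]]
    apply intervalIntegral.integral_finset_sum
    intro j _
    apply Continuous.intervalIntegrable
    have h2 := hqc j
    fun_prop
  rw [hrhs1, hrhs2, Finset.mul_sum]
end

section
/- Suppose X, Y: [0,T] → ℓ² are continuous and satisfy X(t) − β ∫_0^t G^{1/2}Λ(t−s)G^{1/2} X(s) ds = Y(t), where β > 0, G is bounded positive semi-definite self-adjoint with operator norm ‖G‖ ≤ 2β^{−1}, and Λ(t) is diagonal with entries λ_j e^{−λ_j t}, λ_j ≥ 0. Then ∫_0^T ‖X(t)‖² dt ≥ ∫_0^T ‖Y(t)‖² dt. -/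
open MeasureTheory Real intervalIntegral

section Aux

open Set

private lemma key_coord (lam : ℝ) (hlam : 0 < lam) (T : ℝ) (hT : 0 ≤ T)
    (z : ℝ → ℝ) (hz : ContinuousOn z (Icc 0 T)) :
    ∫ t in (0:ℝ)..T, (lam * Real.exp (-lam * t) * ∫ s in (0:ℝ)..t, Real.exp (lam * s) * z s) ^ 2
      ≤ ∫ t in (0:ℝ)..T,
        z t * (lam * Real.exp (-lam * t) * ∫ s in (0:ℝ)..t, Real.exp (lam * s) * z s) := by
  set v : ℝ → ℝ := fun t => ∫ s in (0:ℝ)..t, Real.exp (lam * s) * z s with hv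
  set w : ℝ → ℝ := fun t => lam * Real.exp (-lam * t) * v t with hw
  have hzint : ∀ t ∈ Icc (0:ℝ) T, IntervalIntegrable (fun s => Real.exp (lam * s) * z s) volume 0 t := by
    intro t ht
    apply ContinuousOn.intervalIntegrable
    have : uIcc (0:ℝ) t ⊆ Icc 0 T := by
      rw [uIcc_of_le ht.1]
      exact Icc_subset_Icc le_rfl ht.2
    exact ((Real.continuous_exp.comp (continuous_const.mul continuous_id)).continuousOn.mul
      (hz.mono this)).mono (by simpa using subset_rfl)
  have hvcont : ContinuousOn v (Icc 0 T) := by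
    have := intervalIntegral.continuousOn_primitive_interval (a := (0:ℝ)) (b := T)
      (f := fun s => Real.exp (lam * s) * z s) (μ := volume) ?_
    · rwa [uIcc_of_le hT] at this
    · rw [uIcc_of_le hT]
      apply ContinuousOn.integrableOn_Icc
      exact (Real.continuous_exp.comp (continuous_const.mul continuous_id)).continuousOn.mul hz
  have hwcont : ContinuousOn w (Icc 0 T) :=
    (continuous_const.mul (Real.continuous_exp.comp (continuous_const.mul continuous_id))).continuousOn.mul hvcont
  -- derivative of w on Ioo
  have hwderiv : ∀ t ∈ Ioo (0:ℝ) T, HasDerivAt w (lam * (z t - w t)) t := by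
    intro t ht
    have hzt : ContinuousAt z t := hz.continuousAt (Icc_mem_nhds ht.1 ht.2)
    have hmeas : StronglyMeasurableAtFilter (fun s => Real.exp (lam * s) * z s) (nhds t) volume := by
      apply ContinuousOn.stronglyMeasurableAtFilter isOpen_Ioo
        (((Real.continuous_exp.comp (continuous_const.mul continuous_id)).continuousOn.mul
          (hz.mono Ioo_subset_Icc_self))) t ht
    have hvd : HasDerivAt v (Real.exp (lam * t) * z t) t := by
      exact intervalIntegral.integral_hasDerivAt_right (hzint t (Ioo_subset_Icc_self ht)) hmeas
        ((Real.continuous_exp.comp (continuous_const.mul continuous_id)).continuousAt.mul hzt)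
    have hed : HasDerivAt (fun t => lam * Real.exp (-lam * t)) (lam * (-lam * Real.exp (-lam * t))) t := by
      have hlin : HasDerivAt (fun t : ℝ => -lam * t) (-lam) t := by
        simpa using (hasDerivAt_id t).const_mul (-lam)
      have : HasDerivAt (fun t => Real.exp (-lam * t)) (Real.exp (-lam * t) * -lam) t :=
        (Real.hasDerivAt_exp _).comp t hlin
      simpa [mul_comm, mul_assoc, mul_left_comm] using this.const_mul lam
    have : HasDerivAt (fun t => lam * Real.exp (-lam * t) * v t) _ t := hed.mul hvd
    convert this using 1
    have hee : Real.exp (-lam * t) * Real.exp (lam * t) = 1 := by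
      rw [← Real.exp_add]; norm_num
    simp only [hw]
    linear_combination (-(lam * z t)) * hee
  have hFcont : ContinuousOn (fun t => (w t)^2 / (2*lam)) (Icc 0 T) :=
    (hwcont.pow 2).div_const _
  have hFderiv : ∀ t ∈ Ioo (0:ℝ) T,
      HasDerivWithinAt (fun t => (w t)^2/(2*lam)) (z t * w t - w t ^ 2) (Ioi t) t := by
    intro t ht
    have h2 := ((hwderiv t ht).pow 2).div_const (2*lam)
    have : (2 : ℕ) * w t ^ (2-1) * (lam * (z t - w t)) / (2*lam) = z t * w t - w t ^ 2 := by
      field_simp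
      ring
    rw [this] at h2
    exact h2.hasDerivWithinAt
  have h1 : IntervalIntegrable (fun t => z t * w t) volume 0 T := by
    apply ContinuousOn.intervalIntegrable
    rw [uIcc_of_le hT]; exact hz.mul hwcont
  have h2 : IntervalIntegrable (fun t => w t ^ 2) volume 0 T := by
    apply ContinuousOn.intervalIntegrable
    rw [uIcc_of_le hT]; exact hwcont.pow 2
  have hFTC := intervalIntegral.integral_eq_sub_of_hasDeriv_right_of_le hT hFcont hFderiv (h1.sub h2)
  have hw0 : w 0 = 0 := by simp [hw, hv]
  rw [hw0] at hFTC
  have hsub := intervalIntegral.integral_sub h1 h2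
  have hpos : (0:ℝ) ≤ w T ^ 2 / (2*lam) - 0^2/(2*lam) := by
    have : (0:ℝ) ≤ w T ^ 2 / (2*lam) := by positivity
    simpa using this
  show (∫ t in (0:ℝ)..T, w t ^ 2) ≤ ∫ t in (0:ℝ)..T, z t * w t
  rw [hFTC] at hsub
  linarith

private lemma rep_finset (F : Finset ℕ) (v : lp (fun _ : ℕ => ℝ) 2)
    (hv : ∀ k, k ∉ F → v k = 0) :
    v = ∑ j ∈ F, (v j) • lp.single 2 j (1:ℝ) := by
  classical
  apply lp.ext
  funext k
  simp only [lp.coeFn_sum, Finset.sum_apply]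
  have hterm : ∀ j ∈ F, (((v j) • lp.single 2 j (1:ℝ) : lp (fun _ : ℕ => ℝ) 2)) k
      = if k = j then v j else 0 := by
    intro j _
    rw [lp.coeFn_smul, Pi.smul_apply, smul_eq_mul, lp.single_apply]
    split_ifs with h
    · subst h; simp
    · simp [Pi.single_apply, h]
  rw [Finset.sum_congr rfl hterm, Finset.sum_ite_eq]
  split_ifs with hk
  · rfl
  · exact hv k hk

-- coordinate evaluation as CLM
private noncomputable def ev (j : ℕ) : lp (fun _ : ℕ => ℝ) 2 →L[ℝ] ℝ :=
  innerSL ℝ (lp.single 2 j (1:ℝ))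

private lemma ev_apply (j : ℕ) (f : lp (fun _ : ℕ => ℝ) 2) : ev j f = f j := by
  classical
  simp only [ev, innerSL_apply_apply]
  rw [lp.inner_single_left]
  simp [RCLike.inner_apply]

end Aux

/-- Attractive case: if `X(t) − β ∫_0^t G^{1/2}Λ(t−s)G^{1/2} X(s) ds = Y(t)` with `β > 0`,
`G` positive semi-definite self-adjoint and `‖G‖ ≤ 2β⁻¹`, then `∫_0^T ‖X‖² ≥ ∫_0^T ‖Y‖²`. -/
theorem stmt15 (β : ℝ) (hβ : 0 < β) (l : ℕ → ℝ) (hl : ∀ j, 0 ≤ l j) (hfin : (Function.support l).Finite)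
    (Λ : ℝ → lp (fun _ : ℕ => ℝ) 2 →L[ℝ] lp (fun _ : ℕ => ℝ) 2)
    (hΛ : ∀ (t : ℝ) (X : lp (fun _ : ℕ => ℝ) 2) (j : ℕ),
      Λ t X j = l j * Real.exp (-(l j) * t) * X j)
    (G S : lp (fun _ : ℕ => ℝ) 2 →L[ℝ] lp (fun _ : ℕ => ℝ) 2)
    (hGsa : IsSelfAdjoint G) (hGpos : ∀ X, 0 ≤ (inner ℝ X (G X) : ℝ))
    (hSsa : IsSelfAdjoint S) (hSpos : ∀ X, 0 ≤ (inner ℝ X (S X) : ℝ))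
    (hS2 : S ∘L S = G) (hGnorm : ‖G‖ ≤ 2 * β⁻¹)
    (T : ℝ) (hT : 0 ≤ T) (X Y : ℝ → lp (fun _ : ℕ => ℝ) 2)
    (hX : ContinuousOn X (Set.Icc 0 T)) (hY : ContinuousOn Y (Set.Icc 0 T))
    (heq : ∀ t ∈ Set.Icc (0:ℝ) T,
      X t - β • (∫ s in (0:ℝ)..t, S (Λ (t - s) (S (X s)))) = Y t) :
    ∫ t in (0:ℝ)..T, ‖Y t‖ ^ 2 ≤ ∫ t in (0:ℝ)..T, ‖X t‖ ^ 2 := by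
  classical
  have hSadj : ContinuousLinearMap.adjoint S = S := ContinuousLinearMap.isSelfAdjoint_iff'.mp hSsa
  set F : Finset ℕ := hfin.toFinset with hFdef
  have hFmem : ∀ j, j ∈ F ↔ l j ≠ 0 := fun j => hfin.mem_toFinset
  have hFpos : ∀ j ∈ F, 0 < l j := fun j hj => lt_of_le_of_ne (hl j) (Ne.symm ((hFmem j).mp hj))
  have hFout : ∀ j, j ∉ F → l j = 0 := by
    intro j hj
    by_contra h
    exact hj ((hFmem j).mpr h)
  set zc : ℕ → ℝ → ℝ := fun j t => S (X t) j with hzcdef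
  have hzcont : ∀ j, ContinuousOn (zc j) (Set.Icc 0 T) := by
    intro j
    have : ContinuousOn (fun t => ev j (S (X t))) (Set.Icc 0 T) :=
      ((ev j).continuous.comp S.continuous).comp_continuousOn hX
    simpa only [ev_apply] using this
  set vf : ℕ → ℝ → ℝ := fun j t => ∫ s in (0:ℝ)..t, Real.exp (l j * s) * zc j s with hvfdef
  set wf : ℕ → ℝ → ℝ := fun j t => l j * Real.exp (-(l j) * t) * vf j t with hwfdef
  set Wr : ℝ → lp (fun _ : ℕ => ℝ) 2 := fun t => ∑ j ∈ F, wf j t • lp.single 2 j (1:ℝ)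
    with hWrdef
  -- continuity of the coordinate primitives
  have hvfcont : ∀ j, ContinuousOn (vf j) (Set.Icc 0 T) := by
    intro j
    have := intervalIntegral.continuousOn_primitive_interval (a := (0:ℝ)) (b := T)
      (f := fun s => Real.exp (l j * s) * zc j s) (μ := volume) ?_
    · rwa [Set.uIcc_of_le hT] at this
    · rw [Set.uIcc_of_le hT]
      apply ContinuousOn.integrableOn_Icc
      exact (Real.continuous_exp.comp (continuous_const.mul continuous_id)).continuousOn.mul
        (hzcont j)
  have hwfcont : ∀ j, ContinuousOn (wf j) (Set.Icc 0 T) := fun j =>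
    (continuous_const.mul
      (Real.continuous_exp.comp (continuous_const.mul continuous_id))).continuousOn.mul
      (hvfcont j)
  have hWrcont : ContinuousOn Wr (Set.Icc 0 T) := by
    apply continuousOn_finset_sum
    intro j _
    exact (hwfcont j).smul continuousOn_const
  -- coordinates of Wr
  have hWrcoord : ∀ t k, Wr t k = if k ∈ F then wf k t else 0 := by
    intro t k
    simp only [hWrdef, lp.coeFn_sum, Finset.sum_apply]
    have hterm : ∀ j ∈ F, ((wf j t • lp.single 2 j (1:ℝ) : lp (fun _ : ℕ => ℝ) 2)) k
        = if k = j then wf j t else 0 := by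
      intro j _
      rw [lp.coeFn_smul, Pi.smul_apply, smul_eq_mul, lp.single_apply]
      split_ifs with h
      · subst h; simp
      · simp [Pi.single_apply, h]
    rw [Finset.sum_congr rfl hterm, Finset.sum_ite_eq]
  -- identification of the Volterra integral with Wr
  have hYeq : ∀ t ∈ Set.Icc (0:ℝ) T, Y t = X t - β • S (Wr t) := by
    intro t ht
    have hsub : Set.uIcc (0:ℝ) t ⊆ Set.Icc 0 T := by
      rw [Set.uIcc_of_le ht.1]
      exact Set.Icc_subset_Icc le_rfl ht.2
    -- the integrand is a finite sum of continuous functions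
    have hgcont : ContinuousOn (fun s => Λ (t - s) (S (X s))) (Set.uIcc (0:ℝ) t) := by
      have hsum : ContinuousOn
          (fun s => ∑ j ∈ F, (l j * Real.exp (-(l j) * (t - s)) * zc j s) •
            lp.single 2 j (1:ℝ) : ℝ → lp (fun _ : ℕ => ℝ) 2) (Set.uIcc (0:ℝ) t) := by
        apply continuousOn_finset_sum
        intro j _
        exact ((continuous_const.mul (Real.continuous_exp.comp
          ((continuous_const.mul (continuous_const.sub continuous_id))))).continuousOn.mul
          ((hzcont j).mono hsub)).smul continuousOn_const
      apply hsum.congr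
      intro s _
      show (Λ (t - s)) (S (X s)) = ∑ j ∈ F,
        (l j * Real.exp (-(l j) * (t - s)) * zc j s) • lp.single 2 j (1:ℝ)
      rw [rep_finset F (Λ (t - s) (S (X s))) (fun k hk => by
        rw [hΛ, hFout k hk]; ring)]
      apply Finset.sum_congr rfl
      intro j _
      rw [hΛ]
    have hInt : IntervalIntegrable (fun s => Λ (t - s) (S (X s))) volume 0 t :=
      hgcont.intervalIntegrable
    have hSout : (∫ s in (0:ℝ)..t, S (Λ (t - s) (S (X s))))
        = S (∫ s in (0:ℝ)..t, Λ (t - s) (S (X s))) :=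
      S.intervalIntegral_comp_comm hInt
    have hWcoord : ∀ j, (∫ s in (0:ℝ)..t, Λ (t - s) (S (X s))) j = wf j t := by
      intro j
      have h1 : ev j (∫ s in (0:ℝ)..t, Λ (t - s) (S (X s)))
          = ∫ s in (0:ℝ)..t, ev j (Λ (t - s) (S (X s))) :=
        ((ev j).intervalIntegral_comp_comm hInt).symm
      rw [ev_apply] at h1
      rw [h1]
      have h2 : ∀ s : ℝ, ev j (Λ (t - s) (S (X s)))
          = (l j * Real.exp (-(l j) * t)) * (Real.exp (l j * s) * zc j s) := by
        intro s
        rw [ev_apply, hΛ]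
        rw [show -(l j) * (t - s) = -(l j) * t + l j * s by ring, Real.exp_add]
        ring
      simp only [h2]
      rw [intervalIntegral.integral_const_mul]
    have hWeq : (∫ s in (0:ℝ)..t, Λ (t - s) (S (X s))) = Wr t := by
      apply lp.ext
      funext k
      rw [hWcoord k, hWrcoord t k]
      split_ifs with hk
      · rfl
      · simp [hwfdef, hFout k hk]
    rw [← heq t ht, hSout, hWeq]
  -- inner product identities
  have hinner1 : ∀ u w : lp (fun _ : ℕ => ℝ) 2, (inner ℝ (S u) w : ℝ) = inner ℝ u (S w) := by
    intro u w
    have h := ContinuousLinearMap.adjoint_inner_left (𝕜 := ℝ) S w u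
    rw [hSadj] at h
    exact h
  have htsum : ∀ t (u : lp (fun _ : ℕ => ℝ) 2),
      (inner ℝ u (Wr t) : ℝ) = ∑ j ∈ F, u j * wf j t := by
    intro t u
    rw [lp.inner_eq_tsum]
    rw [tsum_eq_sum (s := F) (fun k hk => by
      simp [RCLike.inner_apply, hWrcoord t k, if_neg hk])]
    apply Finset.sum_congr rfl
    intro j hj
    simp [RCLike.inner_apply, hWrcoord t j, if_pos hj]
    ring
  have hinner : ∀ t, (inner ℝ (X t) (S (Wr t)) : ℝ) = ∑ j ∈ F, zc j t * wf j t := by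
    intro t
    rw [← hinner1, htsum]
  have hnormWr : ∀ t, ‖Wr t‖ ^ 2 = ∑ j ∈ F, wf j t ^ 2 := by
    intro t
    rw [← real_inner_self_eq_norm_sq, htsum]
    apply Finset.sum_congr rfl
    intro j hj
    rw [hWrcoord t j, if_pos hj, sq]
  have hSWbound : ∀ t, ‖S (Wr t)‖ ^ 2 ≤ 2 * β⁻¹ * ∑ j ∈ F, wf j t ^ 2 := by
    intro t
    have h1 : ‖S (Wr t)‖ ^ 2 = (inner ℝ (Wr t) (G (Wr t)) : ℝ) := by
      rw [← real_inner_self_eq_norm_sq, hinner1, ← ContinuousLinearMap.comp_apply, hS2]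
    have h2 : (inner ℝ (Wr t) (G (Wr t)) : ℝ) ≤ ‖G‖ * ‖Wr t‖ ^ 2 := by
      calc (inner ℝ (Wr t) (G (Wr t)) : ℝ) ≤ ‖Wr t‖ * ‖G (Wr t)‖ := real_inner_le_norm _ _
        _ ≤ ‖Wr t‖ * (‖G‖ * ‖Wr t‖) := by
            apply mul_le_mul_of_nonneg_left (G.le_opNorm _) (norm_nonneg _)
        _ = ‖G‖ * ‖Wr t‖ ^ 2 := by ring
    have h3 : ‖G‖ * ‖Wr t‖ ^ 2 ≤ 2 * β⁻¹ * ‖Wr t‖ ^ 2 :=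
      mul_le_mul_of_nonneg_right hGnorm (by positivity)
    rw [h1, ← hnormWr t]
    linarith
  -- integrability facts on [0,T]
  have hIcc : Set.uIcc (0:ℝ) T = Set.Icc 0 T := Set.uIcc_of_le hT
  have hSWcont : ContinuousOn (fun t => S (Wr t)) (Set.Icc 0 T) :=
    S.continuous.comp_continuousOn hWrcont
  have intX2 : IntervalIntegrable (fun t => ‖X t‖ ^ 2) volume 0 T := by
    apply ContinuousOn.intervalIntegrable; rw [hIcc]; exact hX.norm.pow 2
  have intInner : IntervalIntegrable (fun t => (inner ℝ (X t) (S (Wr t)) : ℝ)) volume 0 T := by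
    apply ContinuousOn.intervalIntegrable; rw [hIcc]; exact hX.inner hSWcont
  have intSW2 : IntervalIntegrable (fun t => ‖S (Wr t)‖ ^ 2) volume 0 T := by
    apply ContinuousOn.intervalIntegrable; rw [hIcc]; exact hSWcont.norm.pow 2
  have intzw : ∀ j ∈ F, IntervalIntegrable (fun t => zc j t * wf j t) volume 0 T := by
    intro j _
    apply ContinuousOn.intervalIntegrable; rw [hIcc]; exact (hzcont j).mul (hwfcont j)
  have intw2 : ∀ j ∈ F, IntervalIntegrable (fun t => wf j t ^ 2) volume 0 T := by
    intro j _
    apply ContinuousOn.intervalIntegrable; rw [hIcc]; exact (hwfcont j).pow 2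
  have intsumw2 : IntervalIntegrable (fun t => 2 * β⁻¹ * ∑ j ∈ F, wf j t ^ 2) volume 0 T := by
    apply ContinuousOn.intervalIntegrable; rw [hIcc]
    exact continuousOn_const.mul (continuousOn_finset_sum _ (fun j _ => (hwfcont j).pow 2))
  -- split the square
  have hsplit : ∫ t in (0:ℝ)..T, ‖Y t‖ ^ 2
      = (∫ t in (0:ℝ)..T, ‖X t‖ ^ 2)
        - 2 * β * (∫ t in (0:ℝ)..T, (inner ℝ (X t) (S (Wr t)) : ℝ))
        + β ^ 2 * (∫ t in (0:ℝ)..T, ‖S (Wr t)‖ ^ 2) := by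
    have hEq : Set.EqOn (fun t => ‖Y t‖ ^ 2)
        (fun t => ‖X t‖ ^ 2 - 2 * β * (inner ℝ (X t) (S (Wr t)) : ℝ) + β ^ 2 * ‖S (Wr t)‖ ^ 2)
        (Set.uIcc (0:ℝ) T) := by
      intro t ht
      rw [hIcc] at ht
      show ‖Y t‖ ^ 2 = _
      rw [hYeq t ht, norm_sub_sq_real, real_inner_smul_right, norm_smul, mul_pow,
        Real.norm_eq_abs, sq_abs]
      ring
    rw [intervalIntegral.integral_congr hEq,
      intervalIntegral.integral_add ((intX2.sub (intInner.const_mul _))) (intSW2.const_mul _),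
      intervalIntegral.integral_sub intX2 (intInner.const_mul _),
      intervalIntegral.integral_const_mul, intervalIntegral.integral_const_mul]
  have hIinner : (∫ t in (0:ℝ)..T, (inner ℝ (X t) (S (Wr t)) : ℝ))
      = ∑ j ∈ F, ∫ t in (0:ℝ)..T, zc j t * wf j t := by
    simp only [hinner]
    exact intervalIntegral.integral_finset_sum intzw
  have hI2 : (∫ t in (0:ℝ)..T, ‖S (Wr t)‖ ^ 2)
      ≤ 2 * β⁻¹ * ∑ j ∈ F, ∫ t in (0:ℝ)..T, wf j t ^ 2 := by
    calc (∫ t in (0:ℝ)..T, ‖S (Wr t)‖ ^ 2)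
        ≤ ∫ t in (0:ℝ)..T, 2 * β⁻¹ * ∑ j ∈ F, wf j t ^ 2 :=
          intervalIntegral.integral_mono_on hT intSW2 intsumw2 (fun t _ => hSWbound t)
      _ = 2 * β⁻¹ * ∑ j ∈ F, ∫ t in (0:ℝ)..T, wf j t ^ 2 := by
          rw [intervalIntegral.integral_const_mul, intervalIntegral.integral_finset_sum intw2]
  have hkey : (∑ j ∈ F, ∫ t in (0:ℝ)..T, wf j t ^ 2)
      ≤ ∑ j ∈ F, ∫ t in (0:ℝ)..T, zc j t * wf j t := by
    apply Finset.sum_le_sum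
    intro j hj
    exact key_coord (l j) (hFpos j hj) T hT (zc j) (hzcont j)
  set A := ∑ j ∈ F, ∫ t in (0:ℝ)..T, zc j t * wf j t with hA
  set C := ∑ j ∈ F, ∫ t in (0:ℝ)..T, wf j t ^ 2 with hC
  rw [hsplit, hIinner]
  have h1 : β ^ 2 * (∫ t in (0:ℝ)..T, ‖S (Wr t)‖ ^ 2) ≤ 2 * β * C := by
    have h0 := mul_le_mul_of_nonneg_left hI2 (le_of_lt (by positivity : (0:ℝ) < β ^ 2))
    calc β ^ 2 * (∫ t in (0:ℝ)..T, ‖S (Wr t)‖ ^ 2) ≤ β ^ 2 * (2 * β⁻¹ * C) := h0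
      _ = 2 * β * C := by field_simp
  have h2 : 2 * β * C ≤ 2 * β * A :=
    mul_le_mul_of_nonneg_left hkey (by positivity)
  linarith
end
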